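/- arXiv:2105.09708 — 4 statements merged into one kernel-verified Lean document; each statement's English description precedes it below -/
import Mathlib

section
/- Let (X, T) be a topological dynamical system with natural extension (X̃_T, T̃). Then mdim(X, T) ≥ mdim(X̃_T, T̃). -/
open scoped ENNReal Classical

section MeanDimDefs

variable {X : Type*}

/-- A finite open cover of `X`. -/
def IsFinOpenCover [TopologicalSpace X] (α : Finset (Set X)) : Prop :=
  (∀ A ∈ α, IsOpen A) ∧ ⋃₀ (α : Set (Set X)) = Set.univ

/-- `β` refines `α`: every element of `β` is contained in some element of `α`. -/
def Refines (β α : Finset (Set X)) : Prop :=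
  ∀ B ∈ β, ∃ A ∈ α, B ⊆ A

/-- The order of a finite cover: `sup_x (Σ_A 1_A(x)) - 1`. -/
noncomputable def ordCover (α : Finset (Set X)) : ℕ :=
  (⨆ x : X, (α.filter fun A => x ∈ A).card) - 1

/-- `D(α)`: the minimal order of a finite open cover refining `α`. -/
noncomputable def Dcover [TopologicalSpace X] (α : Finset (Set X)) : ℕ :=
  sInf {n | ∃ β : Finset (Set X), IsFinOpenCover β ∧ Refines β α ∧ ordCover β = n}

/-- The joint `α ∨ β = {U ∩ V : U ∈ α, V ∈ β}`. -/
noncomputable def jointCover (α β : Finset (Set X)) : Finset (Set X) :=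
  (α ×ˢ β).image fun p => p.1 ∩ p.2

/-- The preimage cover `T⁻¹ α`. -/
noncomputable def preimCover (T : X → X) (α : Finset (Set X)) : Finset (Set X) :=
  α.image fun A => T ⁻¹' A

/-- `dynCover T α n = ⋁_{i=0}^{n} T^{-i} α`. -/
noncomputable def dynCover (T : X → X) (α : Finset (Set X)) : ℕ → Finset (Set X)
  | 0 => α
  | n + 1 => jointCover α (preimCover T (dynCover T α n))

/-- Mean dimension relative to a cover:
`mdim(X,T,α) = lim_n D(⋁_{i=0}^{n-1} T^{-i}α)/n = inf_n D(⋁_{i=0}^{n-1} T^{-i}α)/n`. -/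
noncomputable def mdimCover [TopologicalSpace X] (T : X → X) (α : Finset (Set X)) : ℝ≥0∞ :=
  ⨅ n : ℕ, (Dcover (dynCover T α n) : ℝ≥0∞) / (n + 1)

/-- Mean topological dimension. -/
noncomputable def mdim (X : Type*) [TopologicalSpace X] (T : X → X) : ℝ≥0∞ :=
  ⨆ (α : Finset (Set X)) (_ : IsFinOpenCover α), mdimCover T α

/-- Topological (covering) dimension, `dim X = sup_α D(α)`. -/
noncomputable def covDim (X : Type*) [TopologicalSpace X] : ℝ≥0∞ :=
  ⨆ (α : Finset (Set X)) (_ : IsFinOpenCover α), (Dcover α : ℝ≥0∞)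

/-- Stable topological dimension `stabdim X = lim_n dim(X^n)/n = inf_n dim(X^n)/n`. -/
noncomputable def stabdim (X : Type*) [TopologicalSpace X] : ℝ≥0∞ :=
  ⨅ n : ℕ, covDim (Fin (n + 1) → X) / ((n : ℝ≥0∞) + 1)

end MeanDimDefs
section NatExtDefs

variable {X : Type*}

/-- The natural extension space `X̃_T ⊆ X^ℕ`. -/
def natExtSet (T : X → X) : Set (ℕ → X) := {x | ∀ k, T (x (k + 1)) = x k}

/-- The natural extension map `T̃ : (x_k)_k ↦ (T x_0, x_0, x_1, …)`. -/
def natExtMap (T : X → X) : ↥(natExtSet T) → ↥(natExtSet T) := fun x =>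
  ⟨fun k => Nat.rec (T (x.1 0)) (fun k _ => x.1 k) k, by
    intro k
    cases k with
    | zero => rfl
    | succ k => exact x.2 k⟩

end NatExtDefs

/-!
Since `z k = T^[N - k] (z N)` on the natural extension, every basic open set of `X̃_T`
(a cylinder over finitely many coordinates) is the preimage of an open subset of `X` under a
single coordinate projection `z ↦ z N`; by compactness of `X̃_T` one `N` serves a whole finite
open cover `α`, which is therefore refined by the pullback of a finite open cover `β` of `X`.
The projection semiconjugates `T̃` to `T`, and pulling a cover back along a continuous map does
not raise its order, so `mdim(X̃_T, T̃, α) ≤ mdim(X, T, β)`.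
-/

section Covers

variable {X Y : Type*}

lemma Refines.refl (α : Finset (Set X)) : Refines α α := fun B hB => ⟨B, hB, subset_rfl⟩

lemma Refines.trans {γ β α : Finset (Set X)} (h₁ : Refines γ β) (h₂ : Refines β α) :
    Refines γ α := fun C hC => by
  obtain ⟨B, hB, hCB⟩ := h₁ C hC
  obtain ⟨A, hA, hBA⟩ := h₂ B hB
  exact ⟨A, hA, hCB.trans hBA⟩

lemma IsFinOpenCover.nonempty [TopologicalSpace X] [Nonempty X] {α : Finset (Set X)}
    (hα : IsFinOpenCover α) : α.Nonempty := by
  obtain ⟨A, hA, -⟩ := Set.mem_sUnion.mp (hα.2 ▸ Set.mem_univ (Classical.arbitrary X))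
  exact ⟨A, hA⟩

lemma isFinOpenCover_jointCover [TopologicalSpace X] {α β : Finset (Set X)}
    (hα : IsFinOpenCover α) (hβ : IsFinOpenCover β) : IsFinOpenCover (jointCover α β) := by
  refine ⟨?_, Set.eq_univ_of_forall fun x => ?_⟩
  · simp only [jointCover, Finset.mem_image, Finset.mem_product]
    rintro _ ⟨⟨A, B⟩, ⟨hA, hB⟩, rfl⟩
    exact (hα.1 A hA).inter (hβ.1 B hB)
  · obtain ⟨A, hA, hxA⟩ := Set.mem_sUnion.mp (hα.2 ▸ Set.mem_univ x)
    obtain ⟨B, hB, hxB⟩ := Set.mem_sUnion.mp (hβ.2 ▸ Set.mem_univ x)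
    exact ⟨A ∩ B, Finset.mem_image.mpr ⟨(A, B), Finset.mem_product.mpr ⟨hA, hB⟩, rfl⟩, hxA, hxB⟩

lemma Refines.jointCover {γ₁ γ₂ α₁ α₂ : Finset (Set X)} (h₁ : Refines γ₁ α₁)
    (h₂ : Refines γ₂ α₂) : Refines (jointCover γ₁ γ₂) (jointCover α₁ α₂) := by
  simp only [Refines, _root_.jointCover, Finset.mem_image, Finset.mem_product]
  rintro _ ⟨⟨B₁, B₂⟩, ⟨hB₁, hB₂⟩, rfl⟩
  obtain ⟨A₁, hA₁, hs₁⟩ := h₁ B₁ hB₁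
  obtain ⟨A₂, hA₂, hs₂⟩ := h₂ B₂ hB₂
  exact ⟨A₁ ∩ A₂, ⟨(A₁, A₂), ⟨hA₁, hA₂⟩, rfl⟩, Set.inter_subset_inter hs₁ hs₂⟩

noncomputable def pbCover (π : Y → X) (α : Finset (Set X)) : Finset (Set Y) :=
  α.image fun A => π ⁻¹' A

lemma preimCover_eq_pbCover (T : X → X) (α : Finset (Set X)) :
    preimCover T α = pbCover T α := rfl

lemma isFinOpenCover_pbCover [TopologicalSpace X] [TopologicalSpace Y] {π : Y → X}
    (hπ : Continuous π) {β : Finset (Set X)} (hβ : IsFinOpenCover β) :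
    IsFinOpenCover (pbCover π β) := by
  refine ⟨?_, Set.eq_univ_of_forall fun y => ?_⟩
  · simp only [pbCover, Finset.mem_image]
    rintro _ ⟨A, hA, rfl⟩
    exact (hβ.1 A hA).preimage hπ
  · obtain ⟨A, hA, hy⟩ := Set.mem_sUnion.mp (hβ.2 ▸ Set.mem_univ (π y))
    exact ⟨π ⁻¹' A, Finset.mem_image_of_mem _ hA, hy⟩

lemma Refines.pbCover (π : Y → X) {β' β : Finset (Set X)} (h : Refines β' β) :
    Refines (pbCover π β') (pbCover π β) := by
  simp only [Refines, _root_.pbCover, Finset.mem_image]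
  rintro _ ⟨A, hA, rfl⟩
  obtain ⟨A', hA', hs⟩ := h A hA
  exact ⟨π ⁻¹' A', ⟨A', hA', rfl⟩, Set.preimage_mono hs⟩

lemma pbCover_jointCover (π : Y → X) (α β : Finset (Set X)) :
    pbCover π (jointCover α β) = jointCover (pbCover π α) (pbCover π β) := by
  ext C
  simp only [pbCover, jointCover, Finset.mem_image, Finset.mem_product, Prod.exists]
  constructor
  · rintro ⟨_, ⟨A, B, ⟨hA, hB⟩, rfl⟩, rfl⟩
    exact ⟨π ⁻¹' A, π ⁻¹' B, ⟨⟨A, hA, rfl⟩, ⟨B, hB, rfl⟩⟩, rfl⟩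
  · rintro ⟨_, _, ⟨⟨A, hA, rfl⟩, ⟨B, hB, rfl⟩⟩, rfl⟩
    exact ⟨A ∩ B, ⟨A, B, ⟨hA, hB⟩, rfl⟩, rfl⟩

lemma pbCover_preimCover {π : Y → X} {S : Y → Y} {T : X → X} (h : ∀ y, π (S y) = T (π y))
    (α : Finset (Set X)) : pbCover π (preimCover T α) = preimCover S (pbCover π α) := by
  simp only [pbCover, preimCover, Finset.image_image]
  congr 1
  funext A
  ext y
  simp [h]

lemma pbCover_dynCover {π : Y → X} {S : Y → Y} {T : X → X} (h : ∀ y, π (S y) = T (π y))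
    (α : Finset (Set X)) (n : ℕ) :
    pbCover π (dynCover T α n) = dynCover S (pbCover π α) n := by
  induction n with
  | zero => rfl
  | succ n ih => rw [dynCover, dynCover, pbCover_jointCover, pbCover_preimCover h, ih]

lemma isFinOpenCover_dynCover [TopologicalSpace X] {T : X → X} (hT : Continuous T)
    {α : Finset (Set X)} (hα : IsFinOpenCover α) (n : ℕ) :
    IsFinOpenCover (dynCover T α n) := by
  induction n with
  | zero => exact hα
  | succ n ih => exact isFinOpenCover_jointCover hα (isFinOpenCover_pbCover hT ih)

lemma Refines.dynCover (T : X → X) {γ α : Finset (Set X)} (h : Refines γ α) (n : ℕ) :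
    Refines (dynCover T γ n) (dynCover T α n) := by
  induction n with
  | zero => exact h
  | succ n ih => exact h.jointCover (ih.pbCover T)

end Covers

section Dimension

variable {X Y : Type*}

lemma bddAbove_range_card_filter_mem (α : Finset (Set X)) :
    BddAbove (Set.range fun x : X => (α.filter fun A => x ∈ A).card) :=
  ⟨α.card, by rintro _ ⟨x, rfl⟩; exact Finset.card_filter_le _ _⟩

lemma ordCover_pbCover_le (π : Y → X) (δ : Finset (Set X)) :
    ordCover (pbCover π δ) ≤ ordCover δ := by
  refine Nat.sub_le_sub_right (ciSup_le' fun y => ?_) 1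
  calc ((pbCover π δ).filter fun B => y ∈ B).card
      = ((δ.filter fun A => π y ∈ A).image fun A => π ⁻¹' A).card := by
        rw [pbCover, Finset.filter_image]; rfl
    _ ≤ (δ.filter fun A => π y ∈ A).card := Finset.card_image_le
    _ ≤ ⨆ x, (δ.filter fun A => x ∈ A).card := le_ciSup (bddAbove_range_card_filter_mem δ) (π y)

lemma Dcover_le_ordCover [TopologicalSpace X] {α β : Finset (Set X)} (hβ : IsFinOpenCover β)
    (h : Refines β α) : Dcover α ≤ ordCover β :=
  Nat.sInf_le ⟨β, hβ, h, rfl⟩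

lemma exists_ordCover_eq_Dcover [TopologicalSpace X] {α : Finset (Set X)}
    (hα : IsFinOpenCover α) :
    ∃ β, IsFinOpenCover β ∧ Refines β α ∧ ordCover β = Dcover α :=
  Nat.sInf_mem (s := {n | ∃ β, IsFinOpenCover β ∧ Refines β α ∧ ordCover β = n})
    ⟨ordCover α, α, hα, Refines.refl α, rfl⟩

lemma Dcover_mono [TopologicalSpace X] {γ α : Finset (Set X)} (hγ : IsFinOpenCover γ)
    (h : Refines γ α) : Dcover α ≤ Dcover γ := by
  obtain ⟨β, hβ, hβγ, hord⟩ := exists_ordCover_eq_Dcover hγ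
  exact hord ▸ Dcover_le_ordCover hβ (hβγ.trans h)

lemma Dcover_pbCover_le [TopologicalSpace X] [TopologicalSpace Y] {π : Y → X}
    (hπ : Continuous π) {β : Finset (Set X)} (hβ : IsFinOpenCover β) :
    Dcover (pbCover π β) ≤ Dcover β := by
  obtain ⟨δ, hδ, hδβ, hord⟩ := exists_ordCover_eq_Dcover hβ
  calc Dcover (pbCover π β) ≤ ordCover (pbCover π δ) :=
        Dcover_le_ordCover (isFinOpenCover_pbCover hπ hδ) (hδβ.pbCover π)
    _ ≤ ordCover δ := ordCover_pbCover_le π δ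
    _ = Dcover β := hord

lemma Dcover_of_isEmpty [TopologicalSpace X] [IsEmpty X] (α : Finset (Set X)) :
    Dcover α = 0 := by
  have hcover : IsFinOpenCover (∅ : Finset (Set X)) :=
    And.intro (by simp) (Subsingleton.elim _ _)
  have hord : ordCover (∅ : Finset (Set X)) = 0 := by simp [ordCover]
  exact Nat.eq_zero_of_le_zero (hord ▸ Dcover_le_ordCover hcover (by simp [Refines]))

lemma mdimCover_of_isEmpty [TopologicalSpace X] [IsEmpty X] (T : X → X)
    (α : Finset (Set X)) : mdimCover T α = 0 :=
  le_antisymm (iInf_le_of_le 0 (by simp [Dcover_of_isEmpty])) zero_le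

lemma mdimCover_mono [TopologicalSpace X] {T : X → X} (hT : Continuous T)
    {γ α : Finset (Set X)} (hγ : IsFinOpenCover γ) (h : Refines γ α) :
    mdimCover T α ≤ mdimCover T γ := by
  refine iInf_mono fun n => ?_
  gcongr
  exact_mod_cast Dcover_mono (isFinOpenCover_dynCover hT hγ n) (h.dynCover T n)

lemma mdimCover_pbCover_le [TopologicalSpace X] [TopologicalSpace Y] {π : Y → X}
    (hπ : Continuous π) {S : Y → Y} {T : X → X} (hT : Continuous T)
    (h : ∀ y, π (S y) = T (π y)) {β : Finset (Set X)} (hβ : IsFinOpenCover β) :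
    mdimCover S (pbCover π β) ≤ mdimCover T β := by
  refine iInf_mono fun n => ?_
  gcongr
  rw [← pbCover_dynCover h]
  exact_mod_cast Dcover_pbCover_le hπ (isFinOpenCover_dynCover hT hβ n)

lemma mdimCover_le_mdim_of_refines_pbCover [TopologicalSpace X] [TopologicalSpace Y]
    {π : Y → X} (hπ : Continuous π) {S : Y → Y} (hS : Continuous S) {T : X → X}
    (hT : Continuous T) (h : ∀ y, π (S y) = T (π y)) {α : Finset (Set Y)}
    {β : Finset (Set X)} (hβ : IsFinOpenCover β) (hαβ : Refines (pbCover π β) α) :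
    mdimCover S α ≤ mdim X T :=
  calc mdimCover S α ≤ mdimCover S (pbCover π β) :=
        mdimCover_mono hS (isFinOpenCover_pbCover hπ hβ) hαβ
    _ ≤ mdimCover T β := mdimCover_pbCover_le hπ hT h hβ
    _ ≤ mdim X T := le_iSup₂_of_le β hβ le_rfl

/-- The complement of the (closed) range of `π` completes `β` to a cover of `X`; its preimage is
empty. -/
lemma exists_isFinOpenCover_refines_pbCover [TopologicalSpace X] [T2Space X]
    [TopologicalSpace Y] [CompactSpace Y] {π : Y → X} (hπ : Continuous π)
    {α : Finset (Set Y)} (hα : α.Nonempty)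
    (hloc : ∀ y, ∃ V, IsOpen V ∧ π y ∈ V ∧ ∃ A ∈ α, π ⁻¹' V ⊆ A) :
    ∃ β, IsFinOpenCover β ∧ Refines (pbCover π β) α := by
  choose V hV hyV A hA hVA using hloc
  obtain ⟨t, ht⟩ := isCompact_univ.elim_finite_subcover (fun y => π ⁻¹' V y)
    (fun y => (hV y).preimage hπ) fun y _ => Set.mem_iUnion.mpr ⟨y, hyV y⟩
  refine ⟨insert (Set.range π)ᶜ (t.image V), ⟨?_, Set.eq_univ_of_forall fun x => ?_⟩, ?_⟩
  · simp only [Finset.mem_insert, Finset.mem_image]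
    rintro _ (rfl | ⟨y, -, rfl⟩)
    exacts [(isCompact_range hπ).isClosed.isOpen_compl, hV y]
  · by_cases hx : x ∈ Set.range π
    · obtain ⟨z, rfl⟩ := hx
      obtain ⟨y, hyt, hzy⟩ := Set.mem_iUnion₂.mp (ht (Set.mem_univ z))
      exact ⟨V y, Finset.mem_insert_of_mem (Finset.mem_image_of_mem _ hyt), hzy⟩
    · exact ⟨_, Finset.mem_insert_self _ _, hx⟩
  · simp only [Refines, pbCover, Finset.mem_image, Finset.mem_insert]
    rintro _ ⟨_, rfl | ⟨y, -, rfl⟩, rfl⟩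
    · obtain ⟨A₀, hA₀⟩ := hα
      exact ⟨A₀, hA₀, fun z hz => absurd ⟨z, rfl⟩ hz⟩
    · exact ⟨A y, hA y, hVA y⟩

end Dimension

section NaturalExtension

variable {X : Type*} {T : X → X}

def natExtProj (T : X → X) (N : ℕ) (z : natExtSet T) : X := z.1 N

lemma natExtProj_natExtMap (T : X → X) (N : ℕ) (z : natExtSet T) :
    natExtProj T N (natExtMap T z) = T (natExtProj T N z) := by
  cases N with
  | zero => rfl
  | succ m => exact (z.2 m).symm

lemma natExtProj_eq_iterate (z : natExtSet T) {k N : ℕ} (h : k ≤ N) :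
    natExtProj T k z = T^[N - k] (natExtProj T N z) := by
  obtain ⟨m, rfl⟩ := Nat.exists_eq_add_of_le h
  rw [Nat.add_sub_cancel_left]
  induction m with
  | zero => rfl
  | succ m ih =>
    rw [Function.iterate_succ_apply, ← Nat.add_assoc, natExtProj, natExtProj, z.2 (k + m)]
    exact ih (by omega)

lemma natExtProj_preimage_of_le {k N : ℕ} (h : k ≤ N) (V : Set X) :
    natExtProj T k ⁻¹' V = natExtProj T N ⁻¹' (T^[N - k] ⁻¹' V) := by
  ext z
  simp only [Set.mem_preimage, natExtProj_eq_iterate z h]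

variable [TopologicalSpace X]

lemma continuous_natExtProj (T : X → X) (N : ℕ) : Continuous (natExtProj T N) :=
  (continuous_apply N).comp continuous_subtype_val

lemma continuous_natExtMap (hT : Continuous T) : Continuous (natExtMap T) := by
  refine Continuous.subtype_mk (continuous_pi fun k => ?_) _
  cases k with
  | zero => exact hT.comp (continuous_natExtProj T 0)
  | succ k => exact continuous_natExtProj T k

lemma isClosed_natExtSet [T2Space X] (hT : Continuous T) : IsClosed (natExtSet T) := by
  simp only [natExtSet, Set.ofPred_forall]
  exact isClosed_iInter fun k =>
    isClosed_eq (hT.comp (continuous_apply (k + 1))) (continuous_apply k)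

lemma compactSpace_natExtSet [CompactSpace X] [T2Space X] (hT : Continuous T) :
    CompactSpace (natExtSet T) :=
  isCompact_iff_compactSpace.mp (isClosed_natExtSet hT).isCompact

lemma exists_natExtProj_preimage_subset (hT : Continuous T) {U : Set (natExtSet T)}
    (hU : IsOpen U) {y : natExtSet T} (hy : y ∈ U) :
    ∃ M V, IsOpen V ∧ natExtProj T M y ∈ V ∧ natExtProj T M ⁻¹' V ⊆ U := by
  obtain ⟨U', hU', rfl⟩ := isOpen_induced_iff.mp hU
  obtain ⟨I, u, hu, hIu⟩ := isOpen_pi_iff.mp hU' y.1 hy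
  have hle : ∀ i ∈ I, i ≤ I.sup id := fun i hi => Finset.le_sup (f := id) hi
  refine ⟨I.sup id, ⋂ i ∈ I, T^[I.sup id - i] ⁻¹' u i,
    isOpen_biInter_finset fun i hi => (hu i hi).1.preimage (hT.iterate _), ?_, ?_⟩
  · simp only [Set.mem_iInter₂, Set.mem_preimage]
    intro i hi
    rw [← natExtProj_eq_iterate y (hle i hi)]
    exact (hu i hi).2
  · intro z hz
    simp only [Set.mem_preimage, Set.mem_iInter₂] at hz
    refine hIu fun i hi => ?_
    have hzi := hz i hi
    rwa [← natExtProj_eq_iterate z (hle i hi)] at hzi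

lemma exists_natExtProj_refines (hT : Continuous T) [CompactSpace (natExtSet T)]
    {α : Finset (Set (natExtSet T))} (hα : IsFinOpenCover α) :
    ∃ N, ∀ y, ∃ V, IsOpen V ∧ natExtProj T N y ∈ V ∧ ∃ A ∈ α, natExtProj T N ⁻¹' V ⊆ A := by
  have hloc : ∀ y : natExtSet T, ∃ A ∈ α, ∃ M V, IsOpen V ∧ natExtProj T M y ∈ V ∧
      natExtProj T M ⁻¹' V ⊆ A := fun y => by
    obtain ⟨A, hA, hyA⟩ := Set.mem_sUnion.mp (hα.2 ▸ Set.mem_univ y)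
    exact ⟨A, hA, exists_natExtProj_preimage_subset hT (hα.1 A hA) hyA⟩
  choose A hA M V hV hyV hVA using hloc
  obtain ⟨t, ht⟩ := isCompact_univ.elim_finite_subcover (fun y => natExtProj T (M y) ⁻¹' V y)
    (fun y => (hV y).preimage (continuous_natExtProj T _))
    fun y _ => Set.mem_iUnion.mpr ⟨y, hyV y⟩
  refine ⟨t.sup M, fun z => ?_⟩
  obtain ⟨y, hyt, hzy⟩ := Set.mem_iUnion₂.mp (ht (Set.mem_univ z))
  have hsub := hVA y
  rw [natExtProj_preimage_of_le (Finset.le_sup hyt)] at hzy hsub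
  exact ⟨_, (hV y).preimage (hT.iterate _), hzy, A y, hA y, hsub⟩

end NaturalExtension

/-- `mdim(X,T) ≥ mdim(X̃_T, T̃)` for the natural extension. -/
theorem mdim_natExt_le {X : Type*} [TopologicalSpace X] [CompactSpace X]
    [TopologicalSpace.MetrizableSpace X] (T : X → X) (hT : Continuous T) :
    mdim ↥(natExtSet T) (natExtMap T) ≤ mdim X T := by
  refine iSup₂_le fun α hα => ?_
  rcases isEmpty_or_nonempty (natExtSet T) with hempty | hne
  · simp [mdimCover_of_isEmpty]
  have := compactSpace_natExtSet hT
  obtain ⟨N, hloc⟩ := exists_natExtProj_refines hT hα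
  obtain ⟨β, hβ, hαβ⟩ :=
    exists_isFinOpenCover_refines_pbCover (continuous_natExtProj T N) hα.nonempty hloc
  exact mdimCover_le_mdim_of_refines_pbCover (continuous_natExtProj T N)
    (continuous_natExtMap hT) hT (natExtProj_natExtMap T N) hβ hαβ
end

section
/- Let (X, d, T) be a surjective topological dynamical system and let d^ℕ be a product metric on X^ℕ restricted to the natural extension X̃_T, i.e. a metric equivalent to d_δ(x,y) = sup_i δ_i d(x_i, y_i) for some sequence δ_i → 0 of positive numbers. Then the upper and lower metric mean dimensions satisfy mdim_M(X̃_T, T̃, d^ℕ) = mdim_M(X, T, d) (equality of upper with upper and lower with lower). -/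
open scoped ENNReal Classical

section MetricMeanDimDefs

open Filter

variable {Z : Type*}

/-- Maximal cardinality of an `(n,ε)`-separated set for the distance function `ρ`
and the map `F`. -/
noncomputable def sepNum (ρ : Z → Z → ℝ) (F : Z → Z) (n : ℕ) (ε : ℝ) : ℕ :=
  sSup {m : ℕ | ∃ E : Finset Z, E.card = m ∧
    ∀ x ∈ E, ∀ y ∈ E, x ≠ y → ∃ i < n, ε < ρ (F^[i] x) (F^[i] y)}

/-- `h_ρ(F, ε) = limsup_n (1/n) log s_n(ρ, F, ε)`. -/
noncomputable def sepEntropy (ρ : Z → Z → ℝ) (F : Z → Z) (ε : ℝ) : ℝ :=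
  limsup (fun n : ℕ => Real.log (sepNum ρ F n ε) / n) atTop

/-- Upper metric mean dimension `limsup_{ε→0⁺} h_ρ(F,ε)/log(1/ε)`. -/
noncomputable def upperMMDim (ρ : Z → Z → ℝ) (F : Z → Z) : ℝ :=
  limsup (fun ε : ℝ => sepEntropy ρ F ε / Real.log (1 / ε)) (nhdsWithin 0 (Set.Ioi 0))

/-- Lower metric mean dimension `liminf_{ε→0⁺} h_ρ(F,ε)/log(1/ε)`. -/
noncomputable def lowerMMDim (ρ : Z → Z → ℝ) (F : Z → Z) : ℝ :=
  liminf (fun ε : ℝ => sepEntropy ρ F ε / Real.log (1 / ε)) (nhdsWithin 0 (Set.Ioi 0))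

end MetricMeanDimDefs

/-!
A point of `X` lifts to `X̃_T` along a section of `x ↦ x₀`, so `(n, ε)`-separated sets of `X`
lift to `(n, δ₀ ε)`-separated sets of `X̃_T`. Conversely, as `δ_i → 0` only the coordinates below
some `k = k(ε)` are seen at scale `ε`, and coordinate `j ≤ k` of `T̃^i x` is `T^(i+k-j) x_k`; so
projecting to coordinate `k` turns `(n, ε)`-separated sets of `X̃_T` into `(n + k, ε / c)`-separated
sets of `X` (`c = sup δ`), of which there are at most `s_n(ε / c) · N^k` points, `N` being the size
of an `ε / c`-net. Hence `h(X, ε) ≤ h(X̃_T, δ₀ ε)` and `h(X̃_T, ε) ≤ h(X, ε / c)`, and rescaling `ε`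
by a constant changes `h(ε) / log (1 / ε)` only by a factor tending to `1`.
-/

open Filter Topology
open scoped Pointwise

lemma Real.le_of_forall_one_lt_le_mul {a b : ℝ} (h : ∀ r : ℝ, 1 < r → a ≤ r * b) : a ≤ b := by
  have hlim : Tendsto (fun r : ℝ => r * b) (𝓝[>] 1) (𝓝 b) := by
    simpa using ((continuous_mul_const b).tendsto 1).mono_left nhdsWithin_le_nhds
  exact ge_of_tendsto hlim (eventually_nhdsWithin_of_forall h)

lemma Real.sInf_le_sInf_of_forall_smul_subset {S T : Set ℝ} (hS : S.Nonempty) (hT : BddBelow T)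
    (h : ∀ r : ℝ, 1 < r → r • S ⊆ T) : sInf T ≤ sInf S :=
  Real.le_of_forall_one_lt_le_mul fun r hr => by
    rw [← smul_eq_mul, ← Real.sInf_smul_of_nonneg (by positivity)]
    exact csInf_le_csInf hT hS.smul_set (h r hr)

lemma Real.sSup_le_sSup_of_forall_smul_subset {S T : Set ℝ} (hS : S.Nonempty) (hT : BddAbove T)
    (h : ∀ r : ℝ, 1 < r → r⁻¹ • S ⊆ T) : sSup S ≤ sSup T :=
  Real.le_of_forall_one_lt_le_mul fun r hr => by
    have : r⁻¹ * sSup S ≤ sSup T := by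
      rw [← smul_eq_mul, ← Real.sSup_smul_of_nonneg (by positivity)]
      exact csSup_le_csSup hT hS.smul_set (h r hr)
    rwa [inv_mul_le_iff₀ (by positivity)] at this

lemma Real.sInf_eq_of_forall_smul_subset {S T : Set ℝ} (hS : BddBelow S) (hT : BddBelow T)
    (hST : ∀ r : ℝ, 1 < r → r • S ⊆ T) (hTS : ∀ r : ℝ, 1 < r → r • T ⊆ S) : sInf S = sInf T := by
  rcases S.eq_empty_or_nonempty with rfl | hSne
  · have : T = ∅ := by simpa using hTS 2 one_lt_two
    rw [this]
  have hTne : T.Nonempty := hSne.smul_set.mono (hST 2 one_lt_two)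
  exact le_antisymm (Real.sInf_le_sInf_of_forall_smul_subset hTne hS hTS)
    (Real.sInf_le_sInf_of_forall_smul_subset hSne hT hST)

lemma Real.sSup_eq_of_forall_smul_subset {S T : Set ℝ} (hS : S.Nonempty) (hT : T.Nonempty)
    (hST : ∀ r : ℝ, 1 < r → r⁻¹ • S ⊆ T) (hTS : ∀ r : ℝ, 1 < r → r⁻¹ • T ⊆ S) :
    sSup S = sSup T := by
  by_cases hSb : BddAbove S
  · have hTb : BddAbove T := by
      obtain ⟨M, hM⟩ := hSb
      refine ⟨2 * M, fun b hb => ?_⟩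
      have := hM (hTS 2 one_lt_two (Set.smul_mem_smul_set hb))
      simp only [smul_eq_mul] at this
      linarith
    exact le_antisymm (Real.sSup_le_sSup_of_forall_smul_subset hS hTb hST)
      (Real.sSup_le_sSup_of_forall_smul_subset hT hSb hTS)
  · have hTb : ¬ BddAbove T := fun hTb =>
      hSb ((bddAbove_smul_iff_of_pos (inv_pos.2 two_pos)).1 (hTb.mono (hST 2 one_lt_two)))
    rw [Real.sSup_of_not_bddAbove hSb, Real.sSup_of_not_bddAbove hTb]

section Rescaling

variable {α : Type*} {l : Filter α} {A B : α → ℝ} {m : α → α}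

lemma smul_setOf_eventually_le_subset (hm : map m l = l) {r : ℝ} (hr : 0 ≤ r)
    (h : ∀ᶠ x in l, B x ≤ r * A (m x)) :
    r • {a | ∀ᶠ x in l, A x ≤ a} ⊆ {a | ∀ᶠ x in l, B x ≤ a} := by
  rintro _ ⟨a, ha, rfl⟩
  have ha' : ∀ᶠ x in l, A (m x) ≤ a := by rw [← hm] at ha; exact ha
  filter_upwards [h, ha'] with x hx hxa
  exact hx.trans (mul_le_mul_of_nonneg_left hxa hr)

lemma inv_smul_setOf_eventually_ge_subset (hm : map m l = l) {r : ℝ} (hr : 0 < r)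
    (h : ∀ᶠ x in l, B x ≤ r * A (m x)) :
    r⁻¹ • {a | ∀ᶠ x in l, a ≤ B x} ⊆ {a | ∀ᶠ x in l, a ≤ A x} := by
  rintro _ ⟨a, ha, rfl⟩
  rw [← hm]
  filter_upwards [h, ha] with x hx hxa
  change r⁻¹ * a ≤ A (m x)
  rw [inv_mul_le_iff₀ hr]
  exact hxa.trans hx

variable {m₁ m₂ : α → α}

/-- No boundedness is assumed: if `A` is not eventually bounded above, neither is `B`, and both
`limsup`s are the junk value `sInf ∅ = 0`. -/
lemma limsup_eq_of_forall_le_mul_comp [l.NeBot] (hm₁ : map m₁ l = l) (hm₂ : map m₂ l = l)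
    (hA : ∀ᶠ x in l, 0 ≤ A x) (hB : ∀ᶠ x in l, 0 ≤ B x)
    (hAB : ∀ r : ℝ, 1 < r → ∀ᶠ x in l, A x ≤ r * B (m₁ x))
    (hBA : ∀ r : ℝ, 1 < r → ∀ᶠ x in l, B x ≤ r * A (m₂ x)) :
    limsup A l = limsup B l := by
  have bdd : ∀ C : α → ℝ, (∀ᶠ x in l, 0 ≤ C x) → BddBelow {a | ∀ᶠ x in l, C x ≤ a} :=
    fun C hC => ⟨0, fun a ha => by
      obtain ⟨x, hx0, hxa⟩ := (hC.and ha).exists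
      exact hx0.trans hxa⟩
  rw [limsup_eq, limsup_eq]
  exact Real.sInf_eq_of_forall_smul_subset (bdd A hA) (bdd B hB)
    (fun r hr => smul_setOf_eventually_le_subset hm₂ (by positivity) (hBA r hr))
    (fun r hr => smul_setOf_eventually_le_subset hm₁ (by positivity) (hAB r hr))

lemma liminf_eq_of_forall_le_mul_comp (hm₁ : map m₁ l = l) (hm₂ : map m₂ l = l)
    (hA : ∀ᶠ x in l, 0 ≤ A x) (hB : ∀ᶠ x in l, 0 ≤ B x)
    (hAB : ∀ r : ℝ, 1 < r → ∀ᶠ x in l, A x ≤ r * B (m₁ x))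
    (hBA : ∀ r : ℝ, 1 < r → ∀ᶠ x in l, B x ≤ r * A (m₂ x)) :
    liminf A l = liminf B l := by
  rw [liminf_eq, liminf_eq]
  exact Real.sSup_eq_of_forall_smul_subset ⟨0, hA⟩ ⟨0, hB⟩
    (fun r hr => inv_smul_setOf_eventually_ge_subset hm₁ (by positivity) (hAB r hr))
    (fun r hr => inv_smul_setOf_eventually_ge_subset hm₂ (by positivity) (hBA r hr))

end Rescaling

lemma map_const_mul_nhdsGT_zero {a : ℝ} (ha : 0 < a) : map (a * ·) (𝓝[>] (0 : ℝ)) = 𝓝[>] 0 := by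
  conv_lhs => rw [← comap_mulLeft_nhdsGT_zero ha]
  exact map_comap_of_surjective (mul_left_surjective₀ ha.ne') _

lemma tendsto_log_one_div_nhdsGT_zero :
    Tendsto (fun ε : ℝ => Real.log (1 / ε)) (𝓝[>] 0) atTop := by
  simpa [one_div, Real.log_inv, Function.comp_def] using
    tendsto_neg_atBot_atTop.comp Real.tendsto_log_nhdsGT_zero

lemma eventually_div_log_le_mul {f g : ℝ → ℝ} {a : ℝ} (ha : 0 < a) (hg : ∀ ε, 0 ≤ g ε)
    (h : ∀ ε > 0, f ε ≤ g (a * ε)) {r : ℝ} (hr : 1 < r) :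
    ∀ᶠ ε in 𝓝[>] 0, f ε / Real.log (1 / ε) ≤ r * (g (a * ε) / Real.log (1 / (a * ε))) := by
  have hL := tendsto_log_one_div_nhdsGT_zero
  filter_upwards [self_mem_nhdsWithin, hL.eventually_gt_atTop 0,
    hL.eventually_gt_atTop (Real.log a), hL.eventually_ge_atTop (-Real.log a / (r - 1))]
    with ε (hε : 0 < ε) hL0 hLa hLr
  set L := Real.log (1 / ε)
  have hL' : Real.log (1 / (a * ε)) = L - Real.log a := by
    simp only [L, one_div, Real.log_inv, Real.log_mul ha.ne' hε.ne']
    ring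
  have hL'r : L - Real.log a ≤ r * L := by
    rw [div_le_iff₀ (by linarith)] at hLr
    linarith
  rw [hL']
  calc f ε / L ≤ g (a * ε) / L := by gcongr; exact h ε hε
    _ = g (a * ε) / (L - Real.log a) * ((L - Real.log a) / L) := by
      field_simp [(show L - Real.log a ≠ 0 by linarith)]
    _ ≤ g (a * ε) / (L - Real.log a) * r := by
      refine mul_le_mul_of_nonneg_left ?_ (div_nonneg (hg _) (by linarith))
      rwa [div_le_iff₀ hL0]
    _ = r * (g (a * ε) / (L - Real.log a)) := mul_comm _ _

section Separation

variable {Z Z' : Type*} (ρ : Z → Z → ℝ) (F : Z → Z) {n : ℕ} {ε : ℝ}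

def DynSeparated (n : ℕ) (ε : ℝ) (x y : Z) : Prop := ∃ i < n, ε < ρ (F^[i] x) (F^[i] y)

variable {ρ F}

lemma sepNum_le {m : ℕ}
    (h : ∀ E : Finset Z, (E : Set Z).Pairwise (DynSeparated ρ F n ε) → E.card ≤ m) :
    sepNum ρ F n ε ≤ m :=
  csSup_le ⟨0, ∅, rfl, by simp⟩ (by rintro _ ⟨E, rfl, hE⟩; exact h E hE)

lemma card_le_sepNum {m : ℕ}
    (h : ∀ E : Finset Z, (E : Set Z).Pairwise (DynSeparated ρ F n ε) → E.card ≤ m)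
    {E : Finset Z} (hE : (E : Set Z).Pairwise (DynSeparated ρ F n ε)) :
    E.card ≤ sepNum ρ F n ε :=
  le_csSup ⟨m, by rintro _ ⟨E, rfl, hE⟩; exact h E hE⟩ ⟨E, rfl, hE⟩

-- A `code` at scale `ε` is a map whose fibres have `ρ`-diameter at most `ε`: a finite one plays
-- the role of an `ε`-net, and bounds the size of `ε`-separated sets.
lemma not_dynSeparated_of_code {γ : Type*} {t : Z → γ} (ht : ∀ u v, t u = t v → ρ u v ≤ ε) (x : Z) :
    ¬ DynSeparated ρ F n ε x x := by
  rintro ⟨i, -, hi⟩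
  exact (ht _ _ rfl).not_gt hi

variable {γ : Type*} [Fintype γ] {t : Z → γ}

lemma card_le_pow_of_code (ht : ∀ u v, t u = t v → ρ u v ≤ ε) (E : Finset Z)
    (hE : (E : Set Z).Pairwise (DynSeparated ρ F n ε)) :
    E.card ≤ Fintype.card γ ^ n := by
  have hinj : Set.InjOn (fun x (i : Fin n) => t (F^[i] x)) E := by
    intro x hx y hy hxy
    by_contra hne
    obtain ⟨i, hi, hlt⟩ := hE hx hy hne
    exact (ht _ _ (congrFun hxy ⟨i, hi⟩)).not_gt hlt
  simpa using Finset.card_le_card_of_injOn _ (fun _ _ => Finset.mem_univ _) hinj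

lemma sepNum_le_pow_of_code (ht : ∀ u v, t u = t v → ρ u v ≤ ε) :
    sepNum ρ F n ε ≤ Fintype.card γ ^ n :=
  sepNum_le (card_le_pow_of_code ht)

/-- Along the extra `k` steps, a separated set splits into at most `|γ|^k` fibres of the
coding of those steps, each of which is separated in the first `n` steps. -/
lemma sepNum_add_le_of_code (ht : ∀ u v, t u = t v → ρ u v ≤ ε) (k : ℕ) :
    sepNum ρ F (n + k) ε ≤ sepNum ρ F n ε * Fintype.card γ ^ k := by
  refine sepNum_le fun E hE => ?_
  set τ : Z → Fin k → γ := fun x j => t (F^[n + j] x)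
  have hfibre : ∀ b : Fin k → γ,
      ((E.filter fun x => τ x = b : Finset Z) : Set Z).Pairwise (DynSeparated ρ F n ε) := by
    intro b x hx y hy hxy
    rw [Finset.mem_coe, Finset.mem_filter] at hx hy
    obtain ⟨i, hi, hlt⟩ := hE hx.1 hy.1 hxy
    refine ⟨i, ?_, hlt⟩
    by_contra! hni
    have hcode : t (F^[n + (i - n)] x) = t (F^[n + (i - n)] y) :=
      congrFun (hx.2.trans hy.2.symm) ⟨i - n, by omega⟩
    rw [Nat.add_sub_cancel' hni] at hcode
    exact (ht _ _ hcode).not_gt hlt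
  calc E.card = ∑ b : Fin k → γ, (E.filter fun x => τ x = b).card :=
        Finset.card_eq_sum_card_fiberwise fun x _ => Finset.mem_univ (τ x)
    _ ≤ ∑ _b : Fin k → γ, sepNum ρ F n ε :=
        Finset.sum_le_sum fun b _ => card_le_sepNum (card_le_pow_of_code ht) (hfibre b)
    _ = sepNum ρ F n ε * Fintype.card γ ^ k := by simp [mul_comm]

lemma sepNum_le_sepNum_of_map {ρ' : Z' → Z' → ℝ} {F' : Z' → Z'} {n' : ℕ} {ε' : ℝ}
    {φ : Z → Z'} (hφ : ∀ x y, DynSeparated ρ F n ε x y → DynSeparated ρ' F' n' ε' (φ x) (φ y))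
    {t' : Z' → γ} (ht' : ∀ u v, t' u = t' v → ρ' u v ≤ ε') :
    sepNum ρ F n ε ≤ sepNum ρ' F' n' ε' := by
  refine sepNum_le fun E hE => ?_
  have hinj : Set.InjOn φ E := fun x hx y hy hxy => by
    by_contra hne
    exact not_dynSeparated_of_code ht' (φ y) (hxy ▸ hφ x y (hE hx hy hne))
  have hsep : ((E.image φ : Finset Z') : Set Z').Pairwise (DynSeparated ρ' F' n' ε') := by
    rw [Finset.coe_image, hinj.pairwise_image]
    exact fun x hx y hy hxy => hφ x y (hE hx hy hxy)
  rw [← Finset.card_image_of_injOn hinj]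
  exact card_le_sepNum (card_le_pow_of_code ht') hsep

end Separation

lemma Real.log_natCast_le_log_add_log {a b c : ℕ} (h : a ≤ b * c) :
    Real.log a ≤ Real.log b + Real.log c := by
  rcases Nat.eq_zero_or_pos a with rfl | ha
  · simpa using add_nonneg (Real.log_natCast_nonneg b) (Real.log_natCast_nonneg c)
  have hbc : 0 < b * c := ha.trans_le h
  rw [← Real.log_mul (by exact_mod_cast (Nat.pos_of_mul_pos_right hbc).ne')
    (by exact_mod_cast (Nat.pos_of_mul_pos_left hbc).ne')]
  exact Real.log_le_log (by exact_mod_cast ha) (by exact_mod_cast h)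

section Entropy

variable {Z Z' : Type*} {ρ : Z → Z → ℝ} {F : Z → Z} {ε : ℝ}

lemma sepEntropy_nonneg : 0 ≤ sepEntropy ρ F ε := by
  refine Real.sInf_nonneg fun a ha => ?_
  obtain ⟨n, hn⟩ := (ha : ∀ᶠ n in atTop, Real.log (sepNum ρ F n ε) / n ≤ a).exists
  exact (div_nonneg (Real.log_natCast_nonneg _) n.cast_nonneg).trans hn

lemma sepEntropy_le_of_sepNum_le_mul {ρ' : Z' → Z' → ℝ} {F' : Z' → Z'} {ε' : ℝ} (K M : ℕ)
    (h : ∀ n, sepNum ρ F n ε ≤ sepNum ρ' F' n ε' * K) (hM : ∀ n, sepNum ρ' F' n ε' ≤ M ^ n) :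
    sepEntropy ρ F ε ≤ sepEntropy ρ' F' ε' := by
  set u : ℕ → ℝ := fun n => Real.log (sepNum ρ F n ε) / n
  set v : ℕ → ℝ := fun n => Real.log (sepNum ρ' F' n ε') / n
  set w : ℕ → ℝ := fun n => Real.log K / n
  have hu : ∀ n, 0 ≤ u n := fun n => div_nonneg (Real.log_natCast_nonneg _) n.cast_nonneg
  have hv : ∀ n, 0 ≤ v n := fun n => div_nonneg (Real.log_natCast_nonneg _) n.cast_nonneg
  have huv : ∀ n, u n ≤ (v + w) n := fun n => by
    rw [Pi.add_apply, ← add_div]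
    exact div_le_div_of_nonneg_right (Real.log_natCast_le_log_add_log (h n)) n.cast_nonneg
  have hvM : ∀ n, v n ≤ Real.log M := fun n => by
    rcases Nat.eq_zero_or_pos n with rfl | hn
    · simpa [v] using Real.log_natCast_nonneg M
    have hlog : Real.log (sepNum ρ' F' n ε') ≤ n * Real.log M := by
      have := Real.log_natCast_le_log_add_log (b := M ^ n) (c := 1)
        ((hM n).trans_eq (mul_one _).symm)
      rwa [Nat.cast_one, Real.log_one, add_zero, Nat.cast_pow, Real.log_pow] at this
    exact (div_le_iff₀' (by exact_mod_cast hn)).2 hlog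
  have hw : Tendsto w atTop (𝓝 0) := tendsto_const_div_atTop_nhds_zero_nat _
  have hvb : IsBoundedUnder (· ≤ ·) atTop v := isBoundedUnder_of ⟨_, hvM⟩
  calc limsup u atTop ≤ limsup (v + w) atTop :=
        limsup_le_limsup (Eventually.of_forall huv) (isCoboundedUnder_le_of_le atTop hu)
          (isBoundedUnder_le_add hvb hw.isBoundedUnder_le)
    _ ≤ limsup v atTop + limsup w atTop :=
        limsup_add_le (isBoundedUnder_of ⟨0, hv⟩) hvb hw.isBoundedUnder_ge.isCoboundedUnder_le
          hw.isBoundedUnder_le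
    _ = limsup v atTop := by rw [hw.limsup_eq, add_zero]

lemma eventually_nonneg_sepEntropy_div_log :
    ∀ᶠ ε in 𝓝[>] (0 : ℝ), 0 ≤ sepEntropy ρ F ε / Real.log (1 / ε) :=
  (tendsto_log_one_div_nhdsGT_zero.eventually_ge_atTop 0).mono
    fun _ hε => div_nonneg sepEntropy_nonneg hε

theorem upperMMDim_eq_and_lowerMMDim_eq_of_sepEntropy_le {ρ' : Z' → Z' → ℝ} {F' : Z' → Z'} {a b : ℝ}
    (ha : 0 < a) (hb : 0 < b)
    (h₁ : ∀ ε > 0, sepEntropy ρ F ε ≤ sepEntropy ρ' F' (a * ε))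
    (h₂ : ∀ ε > 0, sepEntropy ρ' F' ε ≤ sepEntropy ρ F (b * ε)) :
    upperMMDim ρ F = upperMMDim ρ' F' ∧ lowerMMDim ρ F = lowerMMDim ρ' F' := by
  set A : ℝ → ℝ := fun ε => sepEntropy ρ F ε / Real.log (1 / ε)
  set B : ℝ → ℝ := fun ε => sepEntropy ρ' F' ε / Real.log (1 / ε)
  have hAB (r : ℝ) (hr : 1 < r) : ∀ᶠ ε in 𝓝[>] 0, A ε ≤ r * B (a * ε) :=
    eventually_div_log_le_mul (g := sepEntropy ρ' F') ha (fun _ => sepEntropy_nonneg) h₁ hr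
  have hBA (r : ℝ) (hr : 1 < r) : ∀ᶠ ε in 𝓝[>] 0, B ε ≤ r * A (b * ε) :=
    eventually_div_log_le_mul (g := sepEntropy ρ F) hb (fun _ => sepEntropy_nonneg) h₂ hr
  have hm₁ := map_const_mul_nhdsGT_zero ha
  have hm₂ := map_const_mul_nhdsGT_zero hb
  have hA : ∀ᶠ ε in 𝓝[>] 0, 0 ≤ A ε := eventually_nonneg_sepEntropy_div_log
  have hB : ∀ᶠ ε in 𝓝[>] 0, 0 ≤ B ε := eventually_nonneg_sepEntropy_div_log
  exact ⟨limsup_eq_of_forall_le_mul_comp hm₁ hm₂ hA hB hAB hBA,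
    liminf_eq_of_forall_le_mul_comp hm₁ hm₂ hA hB hAB hBA⟩

end Entropy

lemma exists_fin_code {X : Type*} [MetricSpace X] [CompactSpace X] {ε : ℝ} (hε : 0 < ε) :
    ∃ N, ∃ t : X → Fin N, ∀ u v, t u = t v → dist u v ≤ ε := by
  obtain ⟨s, hs, hcover⟩ :=
    Metric.totallyBounded_iff.1 (isCompact_univ (X := X)).totallyBounded (ε / 2) (half_pos hε)
  have hnear : ∀ u : X, ∃ y : s, dist u y < ε / 2 := fun u => by
    simpa using hcover (Set.mem_univ u)
  choose f hf using hnear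
  have := hs.fintype
  refine ⟨_, Fintype.equivFin s ∘ f, fun u v huv => ?_⟩
  have hfuv : f u = f v := (Fintype.equivFin s).injective huv
  linarith [dist_triangle_right u v (f v), hfuv ▸ hf u, hf v]

section NaturalExtension

variable {X : Type*} {T : X → X}

lemma natExtSet_apply_eq_iterate (x : natExtSet T) (j m : ℕ) : x.1 j = T^[m] (x.1 (j + m)) := by
  induction m with
  | zero => rfl
  | succ m ih => rw [ih, Function.iterate_succ_apply, ← x.2 (j + m)]; rfl

lemma natExtMap_iterate_apply (x : natExtSet T) (i : ℕ) {j k : ℕ} (hjk : j ≤ k) :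
    ((natExtMap T)^[i] x).1 j = T^[i + k - j] (x.1 k) := by
  induction i generalizing j with
  | zero => simpa [Nat.add_sub_cancel' hjk] using natExtSet_apply_eq_iterate x j (k - j)
  | succ i ih =>
    rw [Function.iterate_succ_apply']
    cases j with
    | zero =>
      rw [show i + 1 + k - 0 = (i + k - 0) + 1 by omega, Function.iterate_succ_apply', ← ih hjk]
      rfl
    | succ j =>
      rw [show i + 1 + k - (j + 1) = i + k - j by omega, ← ih (by omega)]
      rfl

noncomputable def natExtSection (hT : Function.Surjective T) (x : X) : natExtSet T :=
  ⟨fun m => (Function.surjInv hT)^[m] x, fun k => by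
    change T ((Function.surjInv hT)^[k + 1] x) = _
    rw [Function.iterate_succ_apply']
    exact Function.surjInv_eq hT _⟩

lemma natExtMap_iterate_natExtSection_zero (hT : Function.Surjective T) (x : X) (i : ℕ) :
    ((natExtMap T)^[i] (natExtSection hT x)).1 0 = T^[i] x :=
  natExtMap_iterate_apply _ i le_rfl

end NaturalExtension

section WeightedSupDist

variable {X : Type*} [MetricSpace X] {δ : ℕ → ℝ}

noncomputable def weightedSupDist (δ : ℕ → ℝ) (x y : ℕ → X) : ℝ := ⨆ i, δ i * dist (x i) (y i)

lemma exists_pos_forall_le (hδ0 : Tendsto δ atTop (𝓝 0)) : ∃ c > 0, ∀ i, δ i ≤ c := by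
  obtain ⟨c, hc⟩ := hδ0.bddAbove_range
  exact ⟨max c 1, by positivity, fun i => (hc ⟨i, rfl⟩).trans (le_max_left _ _)⟩

lemma mul_dist_le_weightedSupDist [CompactSpace X] (hδ0 : Tendsto δ atTop (𝓝 0))
    (x y : ℕ → X) (i : ℕ) :
    δ i * dist (x i) (y i) ≤ weightedSupDist δ x y := by
  obtain ⟨c, hc0, hc⟩ := exists_pos_forall_le hδ0
  refine le_ciSup (f := fun j => δ j * dist (x j) (y j))
    ⟨c * Metric.diam (Set.univ : Set X), ?_⟩ i
  rintro _ ⟨j, rfl⟩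
  exact mul_le_mul (hc j) (Metric.dist_le_diam_of_mem isCompact_univ.isBounded trivial trivial)
    dist_nonneg hc0.le

lemma exists_forall_ge_mul_diam_lt [CompactSpace X] (hδ0 : Tendsto δ atTop (𝓝 0))
    {ε : ℝ} (hε : 0 < ε) : ∃ k, ∀ i ≥ k, δ i * Metric.diam (Set.univ : Set X) < ε :=
  eventually_atTop.1 ((hδ0.mul_const _).eventually_lt_const (by simpa using hε))

variable {T : X → X}

lemma exists_fin_code_natExt [CompactSpace X] (hδ : ∀ i, 0 ≤ δ i)
    (hδ0 : Tendsto δ atTop (𝓝 0)) {ε : ℝ} (hε : 0 < ε) :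
    ∃ N, ∃ t : natExtSet T → Fin N, ∀ u v, t u = t v → weightedSupDist δ u.1 v.1 ≤ ε := by
  obtain ⟨c, hc0, hc⟩ := exists_pos_forall_le hδ0
  obtain ⟨k, hk⟩ := exists_forall_ge_mul_diam_lt (X := X) hδ0 hε
  obtain ⟨N, t, ht⟩ := exists_fin_code (X := X) (div_pos hε hc0)
  refine ⟨_, Fintype.equivFin (Fin k → Fin N) ∘ fun u j => t (u.1 j), fun u v huv => ?_⟩
  replace huv := (Fintype.equivFin _).injective huv
  refine ciSup_le fun i => ?_
  rcases lt_or_ge i k with hik | hik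
  · calc δ i * dist (u.1 i) (v.1 i) ≤ c * (ε / c) :=
          mul_le_mul (hc i) (ht _ _ (congrFun huv ⟨i, hik⟩)) dist_nonneg hc0.le
      _ = ε := mul_div_cancel₀ ε hc0.ne'
  · exact (mul_le_mul_of_nonneg_left
      (Metric.dist_le_diam_of_mem isCompact_univ.isBounded trivial trivial) (hδ i)).trans
      (hk i hik).le

end WeightedSupDist

section NaturalExtensionEntropy

variable {X : Type*} [MetricSpace X] [CompactSpace X] {T : X → X} {δ : ℕ → ℝ} {n : ℕ} {ε : ℝ}

lemma dynSeparated_natExtSection (hT : Function.Surjective T) (hδ : 0 < δ 0)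
    (hδ0 : Tendsto δ atTop (𝓝 0)) {a b : X}
    (h : DynSeparated (fun x y : X => dist x y) T n ε a b) :
    DynSeparated (fun x y : natExtSet T => weightedSupDist δ x.1 y.1) (natExtMap T) n (δ 0 * ε)
      (natExtSection hT a) (natExtSection hT b) := by
  obtain ⟨i, hi, hlt⟩ := h
  refine ⟨i, hi, ?_⟩
  calc δ 0 * ε < δ 0 * dist (T^[i] a) (T^[i] b) := mul_lt_mul_of_pos_left hlt hδ
    _ ≤ _ := by
      rw [← natExtMap_iterate_natExtSection_zero hT a, ← natExtMap_iterate_natExtSection_zero hT b]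
      exact mul_dist_le_weightedSupDist hδ0 _ _ 0

lemma dynSeparated_natExt_coord (hδ : ∀ i, 0 ≤ δ i) {c : ℝ} (hc0 : 0 < c) (hc : ∀ i, δ i ≤ c)
    {k : ℕ} (hk : ∀ i ≥ k, δ i * Metric.diam (Set.univ : Set X) < ε) {x y : natExtSet T}
    (h : DynSeparated (fun x y : natExtSet T => weightedSupDist δ x.1 y.1) (natExtMap T) n ε x y) :
    DynSeparated (fun x y : X => dist x y) T (n + k) (c⁻¹ * ε) (x.1 k) (y.1 k) := by
  obtain ⟨i, hi, hlt⟩ := h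
  obtain ⟨j, hj⟩ := exists_lt_of_lt_ciSup hlt
  have hjk : j < k := by
    by_contra! hjk
    refine (hk j hjk).not_ge (hj.le.trans ?_)
    exact mul_le_mul_of_nonneg_left
      (Metric.dist_le_diam_of_mem isCompact_univ.isBounded trivial trivial) (hδ j)
  rw [natExtMap_iterate_apply x i hjk.le, natExtMap_iterate_apply y i hjk.le] at hj
  refine ⟨i + k - j, by omega, ?_⟩
  rw [inv_mul_lt_iff₀ hc0]
  exact hj.trans_le (mul_le_mul_of_nonneg_right (hc j) dist_nonneg)

lemma sepEntropy_le_sepEntropy_natExt (hT : Function.Surjective T) (hδ : ∀ i, 0 < δ i)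
    (hδ0 : Tendsto δ atTop (𝓝 0)) (hε : 0 < ε) :
    sepEntropy (fun x y : X => dist x y) T ε ≤
      sepEntropy (fun x y : natExtSet T => weightedSupDist δ x.1 y.1) (natExtMap T) (δ 0 * ε) := by
  obtain ⟨N, t, ht⟩ := exists_fin_code_natExt (T := T) (fun i => (hδ i).le) hδ0
    (mul_pos (hδ 0) hε)
  refine sepEntropy_le_of_sepNum_le_mul 1 N (fun n => ?_)
    (fun n => by simpa using sepNum_le_pow_of_code (F := natExtMap T) (n := n) ht)
  rw [mul_one]
  exact sepNum_le_sepNum_of_map (fun a b => dynSeparated_natExtSection hT (hδ 0) hδ0) ht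

lemma sepEntropy_natExt_le (hδ : ∀ i, 0 ≤ δ i) (hδ0 : Tendsto δ atTop (𝓝 0)) {c : ℝ}
    (hc0 : 0 < c) (hc : ∀ i, δ i ≤ c) (hε : 0 < ε) :
    sepEntropy (fun x y : natExtSet T => weightedSupDist δ x.1 y.1) (natExtMap T) ε ≤
      sepEntropy (fun x y : X => dist x y) T (c⁻¹ * ε) := by
  obtain ⟨k, hk⟩ := exists_forall_ge_mul_diam_lt (X := X) hδ0 hε
  obtain ⟨N, t, ht⟩ := exists_fin_code (X := X) (mul_pos (inv_pos.2 hc0) hε)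
  refine sepEntropy_le_of_sepNum_le_mul (N ^ k) N (fun n => ?_)
    (fun n => by simpa using sepNum_le_pow_of_code (F := T) (n := n) ht)
  calc _ ≤ sepNum (fun x y : X => dist x y) T (n + k) (c⁻¹ * ε) :=
        sepNum_le_sepNum_of_map (fun x y => dynSeparated_natExt_coord hδ hc0 hc hk) ht
    _ ≤ _ := by simpa using sepNum_add_le_of_code (F := T) (n := n) ht k

end NaturalExtensionEntropy

theorem mmdim_natExt_product_metric_general {X : Type*} [MetricSpace X] [CompactSpace X]
    (T : X → X) (hTs : Function.Surjective T)
    (δ : ℕ → ℝ) (hδpos : ∀ i, 0 < δ i) (hδ0 : Filter.Tendsto δ Filter.atTop (nhds 0)) :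
    upperMMDim (fun x y : ↥(natExtSet T) => ⨆ i : ℕ, δ i * dist (x.1 i) (y.1 i))
        (natExtMap T) = upperMMDim (fun x y : X => dist x y) T ∧
      lowerMMDim (fun x y : ↥(natExtSet T) => ⨆ i : ℕ, δ i * dist (x.1 i) (y.1 i))
        (natExtMap T) = lowerMMDim (fun x y : X => dist x y) T := by
  obtain ⟨c, hc0, hc⟩ := exists_pos_forall_le hδ0
  exact upperMMDim_eq_and_lowerMMDim_eq_of_sepEntropy_le (inv_pos.2 hc0) (hδpos 0)
    (fun _ => sepEntropy_natExt_le (fun i => (hδpos i).le) hδ0 hc0 hc)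
    (fun _ => sepEntropy_le_sepEntropy_natExt hTs hδpos hδ0)

/-- for a surjective system `(X,d,T)` and a product metric
`d_δ(x,y) = sup_i δ_i d(x_i,y_i)` on the natural extension `X̃_T` (with `δ_i > 0`, `δ_i → 0`),
the upper and lower metric mean dimensions of `(X̃_T, T̃, d_δ)` agree with those of
`(X, T, d)`. -/
theorem mmdim_natExt_product_metric {X : Type*} [MetricSpace X] [CompactSpace X]
    (T : X → X) (hT : Continuous T) (hTs : Function.Surjective T)
    (δ : ℕ → ℝ) (hδpos : ∀ i, 0 < δ i) (hδ0 : Filter.Tendsto δ Filter.atTop (nhds 0)) :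
    upperMMDim (fun x y : ↥(natExtSet T) => ⨆ i : ℕ, δ i * dist (x.1 i) (y.1 i))
        (natExtMap T) = upperMMDim (fun x y : X => dist x y) T ∧
      lowerMMDim (fun x y : ↥(natExtSet T) => ⨆ i : ℕ, δ i * dist (x.1 i) (y.1 i))
        (natExtMap T) = lowerMMDim (fun x y : X => dist x y) T :=
  mmdim_natExt_product_metric_general T hTs δ hδpos hδ0
end

section
/- Let F be a strongly permutative one-dimensional cellular automaton on X^ℤ with local rule f: X^I → X where I contains both negative and positive integers. Then (X^ℤ, F) is topologically conjugate to (X × (X^{J*})^ℕ, g), where J is the set of integers in the convex hull of I ∪ {0}, J* = J \ {0}, and g(x, (y^n)_n) = (f(z), σ y) with z ∈ X^J given by z_0 = x, (z_j)_{j∈J*} = y^0; the conjugacy is φ(x) = (x_0, (x_{J*}, F(x)_{J*}, F²(x)_{J*}, …)). -/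
open scoped ENNReal Classical

section CADefs

variable {X : Type*}

/-- The one-dimensional cellular automaton on `X^ℤ` with local rule `f : X^I → X`:
`F((x_n)_n) = (f((x_{n+j})_{j∈I}))_n`. -/
def caMap (I : Finset ℤ) (f : (↥I → X) → X) : (ℤ → X) → (ℤ → X) :=
  fun x n => f fun j => x (n + (j : ℤ))

/-- `diam(I ∪ {0})` for a finite set `I ⊂ ℤ` (Euclidean diameter, a natural number). -/
def diamZeroIns (I : Finset ℤ) : ℕ :=
  ((insert (0 : ℤ) I).max' (Finset.insert_nonempty 0 I) -
    (insert (0 : ℤ) I).min' (Finset.insert_nonempty 0 I)).toNat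

end CADefs

section Aux

variable {X : Type*} {I : Finset ℤ} (hI : I.Nonempty) {f : (↥I → X) → X}

/-- Finite-range dependence of iterated CA. -/
lemma ca_dep (k : ℕ) (u v : ℤ → X) (s : ℤ)
    (h : ∀ t, s + (k : ℤ) * I.min' hI ≤ t → t ≤ s + (k : ℤ) * I.max' hI → u t = v t) :
    (caMap I f)^[k] u s = (caMap I f)^[k] v s := by
  induction k generalizing s with
  | zero => simpa using h s (by simp) (by simp)
  | succ k ih =>
    rw [Function.iterate_succ_apply', Function.iterate_succ_apply']
    simp only [caMap]
    congr 1
    funext j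
    have hj1 : I.min' hI ≤ (j : ℤ) := Finset.min'_le I j j.2
    have hj2 : (j : ℤ) ≤ I.max' hI := Finset.le_max' I j j.2
    have e1 : ((k + 1 : ℕ) : ℤ) * I.min' hI = (k : ℤ) * I.min' hI + I.min' hI := by
      push_cast; ring
    have e2 : ((k + 1 : ℕ) : ℤ) * I.max' hI = (k : ℤ) * I.max' hI + I.max' hI := by
      push_cast; ring
    apply ih
    intro t ht1 ht2
    exact h t (by linarith) (by linarith)

variable (hperm : ∀ j : ↥I, ((j : ℤ) = I.max' hI ∨ (j : ℤ) = I.min' hI) →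
      ∀ u : ↥I → X, Function.Bijective fun a : X => f (Function.update u j a))

include hperm in
lemma ca_bright (k : ℕ) (s : ℤ) (u : ℤ → X) :
    Function.Bijective fun a : X =>
      (caMap I f)^[k] (Function.update u (s + (k : ℤ) * I.max' hI) a) s := by
  induction k generalizing s u with
  | zero =>
    have : (fun a : X => (caMap I f)^[0] (Function.update u (s + ((0:ℕ) : ℤ) * I.max' hI) a) s)
        = fun a => a := by
      funext a; simp
    rw [this]; exact Function.bijective_id
  | succ k ih =>
    set M := I.max' hI with hM
    set jM : ↥I := ⟨M, I.max'_mem hI⟩ with hjM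
    set p : ℤ := s + ((k + 1 : ℕ) : ℤ) * M with hp
    have hpe : p = (s + M) + (k : ℤ) * M := by rw [hp]; push_cast; ring
    set g : X → X := fun a => (caMap I f)^[k] (Function.update u ((s + M) + (k : ℤ) * M) a) (s + M)
      with hg
    have key : ∀ a : X, (fun j : ↥I => (caMap I f)^[k] (Function.update u p a) (s + (j : ℤ)))
        = Function.update (fun j : ↥I => (caMap I f)^[k] u (s + (j : ℤ))) jM (g a) := by
      intro a
      funext j
      by_cases hj : j = jM
      · subst hj
        rw [Function.update_self]
        rw [hpe, hg]
      · rw [Function.update_of_ne hj]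
        have hjv : (j : ℤ) ≠ M := fun h => hj (Subtype.ext h)
        have hj2 : (j : ℤ) ≤ M := Finset.le_max' I j j.2
        have hjlt : (j : ℤ) < M := lt_of_le_of_ne hj2 hjv
        apply ca_dep hI
        intro t ht1 ht2
        have htp : t ≠ p := by
          intro h; subst h
          rw [hpe] at ht2; linarith
        rw [Function.update_of_ne htp]
    have heq : (fun a : X => (caMap I f)^[k+1] (Function.update u p a) s)
        = (fun b : X => f (Function.update (fun j : ↥I => (caMap I f)^[k] u (s + (j : ℤ))) jM b)) ∘ g := by
      funext a
      show (caMap I f)^[k+1] (Function.update u p a) s = _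
      rw [Function.iterate_succ_apply']
      simp only [caMap, Function.comp]
      rw [← key a]
    rw [show (fun a : X => (caMap I f)^[k+1] (Function.update u (s + ((k+1:ℕ):ℤ) * M) a) s)
        = (fun a : X => (caMap I f)^[k+1] (Function.update u p a) s) from rfl]
    rw [heq]
    exact (hperm jM (Or.inl rfl) _).comp (ih (s + M) u)

include hperm in
lemma ca_bleft (k : ℕ) (s : ℤ) (u : ℤ → X) :
    Function.Bijective fun a : X =>
      (caMap I f)^[k] (Function.update u (s + (k : ℤ) * I.min' hI) a) s := by
  induction k generalizing s u with
  | zero =>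
    have : (fun a : X => (caMap I f)^[0] (Function.update u (s + ((0:ℕ) : ℤ) * I.min' hI) a) s)
        = fun a => a := by
      funext a; simp
    rw [this]; exact Function.bijective_id
  | succ k ih =>
    set m := I.min' hI with hm
    set jm : ↥I := ⟨m, I.min'_mem hI⟩ with hjm
    set p : ℤ := s + ((k + 1 : ℕ) : ℤ) * m with hp
    have hpe : p = (s + m) + (k : ℤ) * m := by rw [hp]; push_cast; ring
    set g : X → X := fun a => (caMap I f)^[k] (Function.update u ((s + m) + (k : ℤ) * m) a) (s + m)
      with hg
    have key : ∀ a : X, (fun j : ↥I => (caMap I f)^[k] (Function.update u p a) (s + (j : ℤ)))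
        = Function.update (fun j : ↥I => (caMap I f)^[k] u (s + (j : ℤ))) jm (g a) := by
      intro a
      funext j
      by_cases hj : j = jm
      · subst hj
        rw [Function.update_self]
        rw [hpe, hg]
      · rw [Function.update_of_ne hj]
        have hjv : (j : ℤ) ≠ m := fun h => hj (Subtype.ext h)
        have hj2 : m ≤ (j : ℤ) := Finset.min'_le I j j.2
        have hjgt : m < (j : ℤ) := lt_of_le_of_ne hj2 (Ne.symm hjv)
        apply ca_dep hI
        intro t ht1 ht2
        have htp : t ≠ p := by
          intro h; subst h
          rw [hpe] at ht1; linarith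
        rw [Function.update_of_ne htp]
    have heq : (fun a : X => (caMap I f)^[k+1] (Function.update u p a) s)
        = (fun b : X => f (Function.update (fun j : ↥I => (caMap I f)^[k] u (s + (j : ℤ))) jm b)) ∘ g := by
      funext a
      show (caMap I f)^[k+1] (Function.update u p a) s = _
      rw [Function.iterate_succ_apply']
      simp only [caMap, Function.comp]
      rw [← key a]
    rw [show (fun a : X => (caMap I f)^[k+1] (Function.update u (s + ((k+1:ℕ):ℤ) * m) a) s)
        = (fun a : X => (caMap I f)^[k+1] (Function.update u p a) s) from rfl]
    rw [heq]
    exact (hperm jm (Or.inr rfl) _).comp (ih (s + m) u)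

include hperm in
lemma ca_step_right (k : ℕ) (s : ℤ) (x x' : ℤ → X)
    (hagree : ∀ t, s + (k : ℤ) * I.min' hI ≤ t → t < s + (k : ℤ) * I.max' hI → x t = x' t)
    (heq : (caMap I f)^[k] x s = (caMap I f)^[k] x' s) :
    x (s + (k : ℤ) * I.max' hI) = x' (s + (k : ℤ) * I.max' hI) := by
  set p : ℤ := s + (k : ℤ) * I.max' hI with hp
  have hfun : (fun a : X => (caMap I f)^[k] (Function.update x p a) s)
      = fun a : X => (caMap I f)^[k] (Function.update x' p a) s := by
    funext a
    apply ca_dep hI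
    intro t ht1 ht2
    by_cases htp : t = p
    · subst htp; rw [Function.update_self, Function.update_self]
    · rw [Function.update_of_ne htp, Function.update_of_ne htp]
      exact hagree t ht1 (lt_of_le_of_ne ht2 htp)
  have h1 : (caMap I f)^[k] (Function.update x p (x p)) s
      = (caMap I f)^[k] (Function.update x' p (x' p)) s := by
    rw [Function.update_eq_self, Function.update_eq_self]; exact heq
  have h2 : (caMap I f)^[k] (Function.update x p (x' p)) s
      = (caMap I f)^[k] (Function.update x' p (x' p)) s := congrFun hfun (x' p)
  exact (ca_bright hI hperm k s x).injective (h1.trans h2.symm)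

include hperm in
lemma ca_step_left (k : ℕ) (s : ℤ) (x x' : ℤ → X)
    (hagree : ∀ t, s + (k : ℤ) * I.min' hI < t → t ≤ s + (k : ℤ) * I.max' hI → x t = x' t)
    (heq : (caMap I f)^[k] x s = (caMap I f)^[k] x' s) :
    x (s + (k : ℤ) * I.min' hI) = x' (s + (k : ℤ) * I.min' hI) := by
  set p : ℤ := s + (k : ℤ) * I.min' hI with hp
  have hfun : (fun a : X => (caMap I f)^[k] (Function.update x p a) s)
      = fun a : X => (caMap I f)^[k] (Function.update x' p a) s := by
    funext a
    apply ca_dep hI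
    intro t ht1 ht2
    by_cases htp : t = p
    · subst htp; rw [Function.update_self, Function.update_self]
    · rw [Function.update_of_ne htp, Function.update_of_ne htp]
      exact hagree t (lt_of_le_of_ne ht1 (Ne.symm htp)) ht2
  have h1 : (caMap I f)^[k] (Function.update x p (x p)) s
      = (caMap I f)^[k] (Function.update x' p (x' p)) s := by
    rw [Function.update_eq_self, Function.update_eq_self]; exact heq
  have h2 : (caMap I f)^[k] (Function.update x p (x' p)) s
      = (caMap I f)^[k] (Function.update x' p (x' p)) s := congrFun hfun (x' p)
  exact (ca_bleft hI hperm k s x).injective (h1.trans h2.symm)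

end Aux

section Uniq

variable {X : Type*} {I : Finset ℤ} (hI : I.Nonempty) {f : (↥I → X) → X}
variable (hperm : ∀ j : ↥I, ((j : ℤ) = I.max' hI ∨ (j : ℤ) = I.min' hI) →
      ∀ u : ↥I → X, Function.Bijective fun a : X => f (Function.update u j a))

set_option linter.unusedSectionVars false in
include hperm in
lemma ca_uniq (hm : I.min' hI ≤ -1) (hM : 1 ≤ I.max' hI) (x x' : ℤ → X)
    (h : ∀ (k : ℕ) (s : ℤ), I.min' hI ≤ s → s ≤ I.max' hI →
      (caMap I f)^[k] x s = (caMap I f)^[k] x' s) : x = x' := by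
  set m := I.min' hI with hmm
  set M := I.max' hI with hMM
  have main : ∀ K : ℕ, ∀ t : ℤ, ((K : ℤ) + 1) * m ≤ t → t ≤ ((K : ℤ) + 1) * M → x t = x' t := by
    intro K
    induction K with
    | zero =>
      intro t h1 h2
      norm_num at h1 h2
      simpa using h 0 t h1 h2
    | succ K ihK =>
      have hMe : ((K : ℤ) + 2) * M = ((K : ℤ) + 1) * M + M := by ring
      have hme : ((K : ℤ) + 2) * m = ((K : ℤ) + 1) * m + m := by ring
      -- right fill
      have right : ∀ r : ℕ, ∀ t : ℤ, ((K : ℤ) + 1) * m ≤ t → t ≤ ((K : ℤ) + 1) * M + r →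
          t ≤ ((K : ℤ) + 2) * M → x t = x' t := by
        intro r
        induction r with
        | zero =>
          intro t h1 h2 _
          exact ihK t h1 (by simpa using h2)
        | succ r ihr =>
          intro t h1 h2 h3
          by_cases hcase : t ≤ ((K : ℤ) + 1) * M + r
          · exact ihr t h1 hcase (by linarith)
          · have hte : t = ((r : ℤ) + 1) + ((K : ℤ) + 1) * M := by push_cast at h2 ⊢; omega
            set s : ℤ := (r : ℤ) + 1 with hs
            have hs1 : 1 ≤ s := by omega
            have hsM : s ≤ M := by
              have hh : s + ((K : ℤ) + 1) * M ≤ ((K : ℤ) + 2) * M := by rw [← hte]; exact h3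
              linarith
            have hcast : ((K + 1 : ℕ) : ℤ) = (K : ℤ) + 1 := by push_cast; ring
            have := ca_step_right hI hperm (K + 1) s x x' ?_ ?_
            · rw [hcast] at this; rw [hte]; exact this
            · intro t' ht1 ht2
              rw [hcast, ← hmm] at ht1
              rw [hcast, ← hMM] at ht2
              apply ihr t' (by linarith) (by omega) (by linarith)
            · exact h (K + 1) s (by linarith) hsM
      have rightAll : ∀ t : ℤ, ((K : ℤ) + 1) * m ≤ t → t ≤ ((K : ℤ) + 2) * M → x t = x' t := by
        intro t h1 h2
        rcases le_or_gt t (((K : ℤ) + 1) * M) with hc | hc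
        · exact ihK t h1 hc
        · have hr : t ≤ ((K : ℤ) + 1) * M + (t - ((K : ℤ) + 1) * M).toNat := by
            rw [Int.toNat_of_nonneg (by linarith)]; linarith
          exact right (t - ((K : ℤ) + 1) * M).toNat t h1 hr h2
      -- left fill
      have left : ∀ r : ℕ, ∀ t : ℤ, ((K : ℤ) + 2) * m ≤ t → ((K : ℤ) + 1) * m - r ≤ t →
          t ≤ ((K : ℤ) + 2) * M → x t = x' t := by
        intro r
        induction r with
        | zero =>
          intro t h1 h2 h3
          exact rightAll t (by simpa using h2) h3
        | succ r ihr =>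
          intro t h1 h2 h3
          by_cases hcase : ((K : ℤ) + 1) * m - r ≤ t
          · exact ihr t h1 hcase h3
          · have hte : t = (-(r : ℤ) - 1) + ((K : ℤ) + 1) * m := by push_cast at h2 ⊢; omega
            set s : ℤ := -(r : ℤ) - 1 with hs
            have hs1 : s ≤ -1 := by omega
            have hsm : m ≤ s := by
              have hh : ((K : ℤ) + 2) * m ≤ s + ((K : ℤ) + 1) * m := by rw [← hte]; exact h1
              linarith
            have hcast : ((K + 1 : ℕ) : ℤ) = (K : ℤ) + 1 := by push_cast; ring
            have := ca_step_left hI hperm (K + 1) s x x' ?_ ?_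
            · rw [hcast] at this; rw [hte]; exact this
            · intro t' ht1 ht2
              rw [hcast, ← hmm] at ht1
              rw [hcast, ← hMM] at ht2
              apply ihr t' (by linarith) (by omega) (by linarith)
            · exact h (K + 1) s hsm (by linarith)
      intro t h1 h2
      rw [show ((K + 1 : ℕ) : ℤ) + 1 = (K : ℤ) + 2 by push_cast; ring] at h1 h2
      have hr : ((K : ℤ) + 1) * m - (-m).toNat ≤ t := by
        rw [Int.toNat_of_nonneg (by linarith)]
        linarith
      exact left (-m).toNat t h1 hr h2
  funext t
  set K := t.natAbs with hKdef
  have habs : (K : ℤ) = |t| := Int.natCast_natAbs t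
  have hK0 : (0 : ℤ) ≤ (K : ℤ) := by positivity
  apply main K t
  · have h1 : ((K : ℤ) + 1) * m ≤ -((K : ℤ) + 1) := by nlinarith
    have h2 := neg_abs_le t
    linarith [h2, habs.ge, habs.le]
  · have h1 : ((K : ℤ) + 1) ≤ ((K : ℤ) + 1) * M := by nlinarith
    have h2 := le_abs_self t
    linarith

end Uniq

section Exist

variable {X : Type*} {I : Finset ℤ} (hI : I.Nonempty) {f : (↥I → X) → X}
variable (hperm : ∀ j : ↥I, ((j : ℤ) = I.max' hI ∨ (j : ℤ) = I.min' hI) →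
      ∀ u : ↥I → X, Function.Bijective fun a : X => f (Function.update u j a))

set_option linter.unusedSectionVars false in
include hperm in
lemma ca_stage (hm : I.min' hI ≤ -1) (hM : 1 ≤ I.max' hI)
    (c : ℕ → ℤ → X) (hc : ∀ k, c (k + 1) 0 = f fun j : ↥I => c k (j : ℤ)) :
    ∀ n : ℕ, ∃ x : ℤ → X, ∀ k ≤ n, ∀ s : ℤ, I.min' hI ≤ s → s ≤ I.max' hI →
      (caMap I f)^[k] x s = c k s := by
  set m := I.min' hI with hmm
  set M := I.max' hI with hMM
  intro n
  induction n with
  | zero =>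
    refine ⟨c 0, ?_⟩
    intro k hk s h1 h2
    interval_cases k
    simp
  | succ K ihK =>
    obtain ⟨x, hx⟩ := ihK
    have hKc : ((K + 1 : ℕ) : ℤ) = (K : ℤ) + 1 := by push_cast; ring
    -- right fill
    have right : ∀ r : ℕ, ∃ x' : ℤ → X,
        (∀ t : ℤ, t ≤ ((K : ℤ) + 1) * M → x' t = x t) ∧
        (∀ s : ℤ, 1 ≤ s → s ≤ (r : ℤ) → s ≤ M → (caMap I f)^[K + 1] x' s = c (K + 1) s) := by
      intro r
      induction r with
      | zero =>
        exact ⟨x, fun t _ => rfl, fun s hs1 hs2 _ => by omega⟩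
      | succ r ihr =>
        obtain ⟨x', hx'1, hx'2⟩ := ihr
        rcases le_or_gt (M : ℤ) (r : ℤ) with hMr | hMr
        · exact ⟨x', hx'1, fun s hs1 hs2 hs3 => hx'2 s hs1 (by omega) hs3⟩
        · obtain ⟨a, ha⟩ := (ca_bright hI hperm (K + 1) ((r : ℤ) + 1) x').surjective
            (c (K + 1) ((r : ℤ) + 1))
          set p : ℤ := ((r : ℤ) + 1) + ((K : ℤ) + 1) * M with hp
          have hpc : ((r : ℤ) + 1) + ((K + 1 : ℕ) : ℤ) * I.max' hI = p := by
            rw [hKc, ← hMM]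
          rw [hpc] at ha
          refine ⟨Function.update x' p a, ?_, ?_⟩
          · intro t ht
            rw [Function.update_of_ne (by omega)]
            exact hx'1 t ht
          · intro s hs1 hs2 hs3
            rcases le_or_gt s (r : ℤ) with hsr | hsr
            · have : (caMap I f)^[K + 1] (Function.update x' p a) s
                  = (caMap I f)^[K + 1] x' s := by
                apply ca_dep hI
                intro t ht1 ht2
                rw [hKc, ← hMM] at ht2
                rw [Function.update_of_ne (by intro hh; subst hh; omega)]
              rw [this]
              exact hx'2 s hs1 hsr hs3
            · have hse : s = (r : ℤ) + 1 := by omega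
              subst hse
              exact ha
    obtain ⟨x', hx'1, hx'2⟩ := right M.toNat
    -- left fill
    have left : ∀ r : ℕ, ∃ y : ℤ → X,
        (∀ t : ℤ, ((K : ℤ) + 1) * m ≤ t → y t = x' t) ∧
        (∀ s : ℤ, -(r : ℤ) ≤ s → s ≤ -1 → (caMap I f)^[K + 1] y s = c (K + 1) s) := by
      intro r
      induction r with
      | zero =>
        exact ⟨x', fun t _ => rfl, fun s hs1 hs2 => by omega⟩
      | succ r ihr =>
        obtain ⟨y, hy1, hy2⟩ := ihr
        obtain ⟨a, ha⟩ := (ca_bleft hI hperm (K + 1) (-(r : ℤ) - 1) y).surjective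
          (c (K + 1) (-(r : ℤ) - 1))
        set p : ℤ := (-(r : ℤ) - 1) + ((K : ℤ) + 1) * m with hp
        have hpc : (-(r : ℤ) - 1) + ((K + 1 : ℕ) : ℤ) * I.min' hI = p := by
          rw [hKc, ← hmm]
        rw [hpc] at ha
        refine ⟨Function.update y p a, ?_, ?_⟩
        · intro t ht
          rw [Function.update_of_ne (by omega)]
          exact hy1 t (by omega)
        · intro s hs1 hs2
          rcases le_or_gt (-(r : ℤ)) s with hsr | hsr
          · have : (caMap I f)^[K + 1] (Function.update y p a) s
                = (caMap I f)^[K + 1] y s := by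
              apply ca_dep hI
              intro t ht1 ht2
              rw [hKc, ← hmm] at ht1
              rw [Function.update_of_ne (by intro hh; rw [hh, hp] at ht1; linarith)]
            rw [this]
            exact hy2 s hsr hs2
          · have hse : s = -(r : ℤ) - 1 := by omega
            subst hse
            exact ha
    obtain ⟨y, hy1, hy2⟩ := left (-m).toNat
    refine ⟨y, ?_⟩
    have hmid : ∀ t : ℤ, ((K : ℤ) + 1) * m ≤ t → t ≤ ((K : ℤ) + 1) * M → y t = x t :=
      fun t h1 h2 => (hy1 t h1).trans (hx'1 t h2)
    have hlow : ∀ k ≤ K, ∀ s : ℤ, m ≤ s → s ≤ M → (caMap I f)^[k] y s = c k s := by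
      intro k hk s h1 h2
      have : (caMap I f)^[k] y s = (caMap I f)^[k] x s := by
        apply ca_dep hI
        intro t ht1 ht2
        rw [← hmm] at ht1
        rw [← hMM] at ht2
        apply hmid t
        · have hkK : (k : ℤ) ≤ (K : ℤ) := by exact_mod_cast hk
          nlinarith
        · have hkK : (k : ℤ) ≤ (K : ℤ) := by exact_mod_cast hk
          nlinarith
      rw [this]
      exact hx k hk s h1 h2
    intro k hk s h1 h2
    rcases Nat.lt_or_ge k (K + 1) with hkK | hkK
    · exact hlow k (by omega) s h1 h2
    · have hke : k = K + 1 := by omega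
      subst hke
      rcases lt_trichotomy s 0 with hs | hs | hs
      · exact hy2 s (by rw [Int.toNat_of_nonneg (by linarith)]; linarith) (by omega)
      · subst hs
        rw [Function.iterate_succ_apply']
        simp only [caMap]
        rw [hc K]
        congr 1
        funext j
        have hj1 : m ≤ (j : ℤ) := Finset.min'_le I j j.2
        have hj2 : (j : ℤ) ≤ M := Finset.le_max' I j j.2
        rw [zero_add]
        exact hlow K le_rfl (j : ℤ) hj1 hj2
      · have : (caMap I f)^[K + 1] y s = (caMap I f)^[K + 1] x' s := by
          apply ca_dep hI
          intro t ht1 ht2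
          rw [hKc, ← hmm] at ht1
          apply hy1 t (by nlinarith)
        rw [this]
        exact hx'2 s (by omega) (by rw [Int.toNat_of_nonneg (by linarith)]; linarith) h2

end Exist

section ExistTop

variable {X : Type*} {I : Finset ℤ} (hI : I.Nonempty) {f : (↥I → X) → X}

lemma ca_cont [TopologicalSpace X] (hf : Continuous f) (k : ℕ) :
    Continuous ((caMap I f)^[k] : (ℤ → X) → (ℤ → X)) := by
  have hF : Continuous (caMap I f) :=
    continuous_pi fun n => hf.comp (continuous_pi fun j => continuous_apply _)
  induction k with
  | zero => exact continuous_id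
  | succ k ih => rw [Function.iterate_succ]; exact ih.comp hF

set_option linter.unusedSectionVars false in
lemma ca_exist [TopologicalSpace X] [CompactSpace X] [T2Space X] (hf : Continuous f)
    (hperm : ∀ j : ↥I, ((j : ℤ) = I.max' hI ∨ (j : ℤ) = I.min' hI) →
      ∀ u : ↥I → X, Function.Bijective fun a : X => f (Function.update u j a))
    (hm : I.min' hI ≤ -1) (hM : 1 ≤ I.max' hI)
    (c : ℕ → ℤ → X) (hc : ∀ k, c (k + 1) 0 = f fun j : ↥I => c k (j : ℤ)) :
    ∃ x : ℤ → X, ∀ (k : ℕ) (s : ℤ), I.min' hI ≤ s → s ≤ I.max' hI →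
      (caMap I f)^[k] x s = c k s := by
  set C : ℕ → Set (ℤ → X) := fun n =>
    {x | ∀ k ≤ n, ∀ s : ℤ, I.min' hI ≤ s → s ≤ I.max' hI → (caMap I f)^[k] x s = c k s}
    with hC
  have hclosed : ∀ n, IsClosed (C n) := by
    intro n
    have : C n = ⋂ (k : ℕ) (_ : k ≤ n) (s : ℤ) (_ : I.min' hI ≤ s) (_ : s ≤ I.max' hI),
        {x : ℤ → X | (caMap I f)^[k] x s = c k s} := by
      ext x; simp [hC]
    rw [this]
    exact isClosed_iInter fun k => isClosed_iInter fun _ => isClosed_iInter fun s =>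
      isClosed_iInter fun _ => isClosed_iInter fun _ =>
        isClosed_eq ((continuous_apply s).comp (ca_cont hf k)) continuous_const
  have hne : ∀ n, (C n).Nonempty := by
    intro n
    obtain ⟨x, hx⟩ := ca_stage hI hperm hm hM c hc n
    exact ⟨x, hx⟩
  have hmono : ∀ n, C (n + 1) ⊆ C n := fun n x hx k hk => hx k (hk.trans (Nat.le_succ n))
  obtain ⟨x, hx⟩ := IsCompact.nonempty_iInter_of_sequence_nonempty_isCompact_isClosed
    C hmono hne ((hclosed 0).isCompact) hclosed
  refine ⟨x, fun k s h1 h2 => ?_⟩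
  exact (Set.mem_iInter.mp hx k) k le_rfl s h1 h2

end ExistTop

/-- a strongly permutative one-dimensional CA whose domain `I` contains both
negative and positive integers is topologically conjugate to
`(X × (X^{J*})^ℕ, g)` via `φ(x) = (x_0, (F^k(x)_{J*})_{k∈ℕ})`, where `J` is the set of
integers in the convex hull of `I ∪ {0}`, `J* = J \ {0}`, and
`g(x, (y^n)_n) = (f(z), σ y)` with `z_0 = x` and `z_{J*} = y^0`. -/
theorem ca_strongly_permutative_conj {X : Type*} [TopologicalSpace X] [CompactSpace X]
    [TopologicalSpace.MetrizableSpace X]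
    (I : Finset ℤ) (hI : I.Nonempty) (f : (↥I → X) → X) (hf : Continuous f)
    (hneg : ∃ a ∈ I, a < 0) (hpos : ∃ b ∈ I, 0 < b)
    (hperm : ∀ j : ↥I, ((j : ℤ) = I.max' hI ∨ (j : ℤ) = I.min' hI) →
      ∀ u : ↥I → X, Function.Bijective fun a : X => f (Function.update u j a)) :
    ∃ e : (ℤ → X) ≃ₜ X × (ℕ → (↥((Finset.Icc (I.min' hI) (I.max' hI)).erase 0) → X)),
      (∀ x : ℤ → X, e x = (x 0, fun (k : ℕ) (j : ↥((Finset.Icc (I.min' hI) (I.max' hI)).erase 0)) => (caMap I f)^[k] x ((j : ℤ)))) ∧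
      ∀ x : ℤ → X,
        e (caMap I f x) =
          (f (fun i : ↥I => if h : (i : ℤ) = 0 then (e x).1
              else (e x).2 0 ⟨(i : ℤ), Finset.mem_erase.2 ⟨h,
                Finset.mem_Icc.2 ⟨Finset.min'_le I _ i.2, Finset.le_max' I _ i.2⟩⟩⟩),
            fun k => (e x).2 (k + 1)) := by
  classical
  have hm : I.min' hI ≤ -1 := by
    obtain ⟨a, haI, ha⟩ := hneg
    have := Finset.min'_le I a haI
    omega
  have hM : 1 ≤ I.max' hI := by
    obtain ⟨b, hbI, hb⟩ := hpos
    have := Finset.le_max' I b hbI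
    omega
  haveI : T2Space X := inferInstance
  set J : Finset ℤ := (Finset.Icc (I.min' hI) (I.max' hI)).erase 0 with hJ
  have hmemJ : ∀ s : ℤ, s ∈ J ↔ (s ≠ 0 ∧ I.min' hI ≤ s ∧ s ≤ I.max' hI) := by
    intro s; rw [hJ, Finset.mem_erase, Finset.mem_Icc]
  set φ : (ℤ → X) → X × (ℕ → ↥J → X) :=
    fun x => (x 0, fun k j => (caMap I f)^[k] x (j : ℤ)) with hφ
  have hinj : Function.Injective φ := by
    intro x x' hxx
    have h0 : x 0 = x' 0 := congrArg Prod.fst hxx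
    have h2 : ∀ (k : ℕ) (j : ↥J), (caMap I f)^[k] x (j : ℤ) = (caMap I f)^[k] x' (j : ℤ) :=
      fun k j => congrFun (congrFun (congrArg Prod.snd hxx) k) j
    apply ca_uniq hI hperm hm hM
    intro k
    induction k with
    | zero =>
      intro s hs1 hs2
      by_cases hs : s = 0
      · subst hs; simpa using h0
      · exact h2 0 ⟨s, (hmemJ s).2 ⟨hs, hs1, hs2⟩⟩
    | succ k ih =>
      intro s hs1 hs2
      by_cases hs : s = 0
      · subst hs
        rw [Function.iterate_succ_apply', Function.iterate_succ_apply']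
        simp only [caMap]
        congr 1
        funext j
        exact ih (0 + (j : ℤ)) (by have := Finset.min'_le I _ j.2; omega)
          (by have := Finset.le_max' I _ j.2; omega)
      · exact h2 (k + 1) ⟨s, (hmemJ s).2 ⟨hs, hs1, hs2⟩⟩
  have hsurj : Function.Surjective φ := by
    rintro ⟨x0, y⟩
    set c : ℕ → ℤ → X := fun k => Nat.rec
      (fun t => if h : t ∈ J then y 0 ⟨t, h⟩ else x0)
      (fun k ih t => if h : t ∈ J then y (k + 1) ⟨t, h⟩ else f fun j : ↥I => ih (j : ℤ)) k
      with hcdef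
    have hc0 : ∀ t, c 0 t = if h : t ∈ J then y 0 ⟨t, h⟩ else x0 := fun t => rfl
    have hcs : ∀ k t, c (k + 1) t =
        if h : t ∈ J then y (k + 1) ⟨t, h⟩ else f fun j : ↥I => c k (j : ℤ) := fun k t => rfl
    have h0J : (0 : ℤ) ∉ J := by rw [hmemJ]; simp
    have hc : ∀ k, c (k + 1) 0 = f fun j : ↥I => c k (j : ℤ) := by
      intro k; rw [hcs, dif_neg h0J]
    obtain ⟨x, hx⟩ := ca_exist hI hf hperm hm hM c hc
    refine ⟨x, ?_⟩
    rw [hφ]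
    refine Prod.ext ?_ ?_
    · show x 0 = x0
      have := hx 0 0 (by omega) (by omega)
      simpa [hc0, dif_neg h0J] using this
    · show (fun k (j : ↥J) => (caMap I f)^[k] x (j : ℤ)) = y
      funext k j
      have hj := j.2
      rw [hmemJ] at hj
      have := hx k (j : ℤ) hj.2.1 hj.2.2
      rw [this]
      cases k with
      | zero => rw [hc0, dif_pos j.2]
      | succ k => rw [hcs, dif_pos j.2]
  set E : (ℤ → X) ≃ X × (ℕ → ↥J → X) := Equiv.ofBijective φ ⟨hinj, hsurj⟩ with hE
  have hcont : Continuous φ := by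
    apply Continuous.prodMk
    · exact continuous_apply 0
    · exact continuous_pi fun k => continuous_pi fun j =>
        (continuous_apply ((j : ℤ))).comp (ca_cont hf k)
  have hcontE : Continuous E := hcont
  refine ⟨hcontE.homeoOfEquivCompactToT2, ?_, ?_⟩
  · intro x; rfl
  · intro x
    have hrepr : ∀ z : ℤ → X, hcontE.homeoOfEquivCompactToT2 z
        = (z 0, fun (k : ℕ) (j : ↥J) => (caMap I f)^[k] z (j : ℤ)) := fun z => rfl
    rw [hrepr, hrepr]
    refine Prod.ext ?_ ?_
    · show caMap I f x 0 = _
      simp only [caMap]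
      congr 1
      funext i
      by_cases hi : (i : ℤ) = 0
      · rw [dif_pos hi, zero_add, hi]
      · rw [dif_neg hi, zero_add]
        rfl
    · show (fun (k : ℕ) (j : ↥J) => (caMap I f)^[k] (caMap I f x) (j : ℤ)) = _
      funext k j
      show (caMap I f)^[k] (caMap I f x) (j : ℤ) = (caMap I f)^[k + 1] x (j : ℤ)
      rw [Function.iterate_succ_apply]
end

section
/- Let X be an infinite compact metrizable space and F a permutative cellular automaton on X^ℤ. Then the topological entropy of F is infinite. -/
/-!
Suppose the rule is permutative in its rightmost variable `m = max I > 0`; the leftmost case is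
the mirror image. Then `F^[t] x 0` depends only on the cells `≤ t * m` and is a surjective
function of the cell `t * m`, so that cell `(t + 1) * m` can be chosen to prescribe
`F^[t+1] x 0` without changing the earlier values. By compactness the trace
`x ↦ (F^[t] x 0)_{t ∈ ℕ}` is therefore onto `X^ℕ`, and it intertwines `F` with the one-sided
shift. That shift has infinite entropy: `k` distinct points of `X` separated by an entourage `V`
yield `k ^ n` configurations whose orbits are pairwise `V`-apart within time `n`.
-/

open scoped ENNReal Classical

open Dynamics Filter Function Set Uniformity
open scoped SetRel Pointwise

section Shift

variable {Y : Type*}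

def leftShift (u : ℕ → Y) : ℕ → Y := fun n => u (n + 1)

lemma leftShift_iterate_apply (j : ℕ) (u : ℕ → Y) (n : ℕ) : leftShift^[j] u n = u (n + j) := by
  induction j generalizing n with
  | zero => rfl
  | succ j ih => rw [iterate_succ_apply', leftShift, ih, add_assoc, add_comm 1]

variable [UniformSpace Y]

lemma Function.Injective.exists_entourage_separating [T0Space Y] {ι : Type*} [Finite ι]
    {e : ι → Y} (he : Injective e) : ∃ V ∈ 𝓤 Y, ∀ i j z, (e i, z) ∈ V → (e j, z) ∈ V → i = j := by
  have hsep (p : ι × ι) : ∃ U ∈ 𝓤 Y, (e p.1, e p.2) ∈ U → p.1 = p.2 := by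
    by_cases hp : p.1 = p.2
    · exact ⟨univ, univ_mem, fun _ => hp⟩
    · obtain ⟨U, hU, hpU⟩ := t0Space_iff_uniformity'.1 ‹_› (he.ne hp)
      exact ⟨U, hU, fun h => absurd h hpU⟩
  choose U hU hUsep using hsep
  obtain ⟨V, hV, hVsymm, hVU⟩ := comp_symm_mem_uniformity_sets (iInter_mem.2 hU)
  refine ⟨V, hV, fun i j z hi hj => hUsep (i, j) (mem_iInter.1 (hVU ?_) (i, j))⟩
  exact ⟨z, hi, SetRel.symm V hj⟩

lemma pow_card_le_netMaxcard_leftShift [Nonempty Y] {ι : Type*} [Fintype ι] {e : ι → Y}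
    {V : SetRel Y Y} (hV : V ∈ 𝓤 Y) (hsep : ∀ i j z, (e i, z) ∈ V → (e j, z) ∈ V → i = j)
    (n : ℕ) :
    (Fintype.card ι : ℕ∞) ^ n ≤
      netMaxcard leftShift univ ((fun p : (ℕ → Y) × (ℕ → Y) => (p.1 0, p.2 0)) ⁻¹' V) n := by
  let word (w : Fin n → ι) : ℕ → Y :=
    fun j => if h : j < n then e (w ⟨j, h⟩) else Classical.arbitrary Y
  have word_apply (w : Fin n → ι) (j : Fin n) : word w j = e (w j) := dif_pos j.isLt
  have word_injective : Injective word := fun w w' h => funext fun j =>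
    hsep _ _ (e (w j)) (refl_mem_uniformity hV)
      (by rw [← word_apply, ← h, word_apply]; exact refl_mem_uniformity hV)
  have hnet : IsDynNetIn leftShift univ ((fun p : (ℕ → Y) × (ℕ → Y) => (p.1 0, p.2 0)) ⁻¹' V) n
      (Finset.univ.image word : Set (ℕ → Y)) := by
    refine ⟨subset_univ _, ?_⟩
    simp only [Finset.coe_image, Finset.coe_univ, image_univ]
    rintro _ ⟨w, rfl⟩ _ ⟨w', rfl⟩ hww'
    refine disjoint_left.2 fun z hz hz' => hww' (congrArg word (funext fun j => ?_))
    rw [mem_ball_dynEntourage] at hz hz'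
    have h := hz j j.isLt
    have h' := hz' j j.isLt
    simp only [UniformSpace.ball, mem_preimage, leftShift_iterate_apply, zero_add,
      word_apply] at h h'
    exact hsep _ _ _ h h'
  calc (Fintype.card ι : ℕ∞) ^ n = (Finset.univ.image word).card := by
        simp [Finset.card_image_of_injective _ word_injective]
    _ ≤ _ := hnet.card_le_netMaxcard

lemma log_card_le_coverEntropy_leftShift [T0Space Y] {ι : Type*} [Fintype ι] [Nonempty Y]
    {e : ι → Y} (he : Injective e) :
    ENNReal.log (Fintype.card ι) ≤ coverEntropy (leftShift (Y := Y)) univ := by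
  obtain ⟨V, hV, hsep⟩ := he.exists_entourage_separating
  have hW : (fun p : (ℕ → Y) × (ℕ → Y) => (p.1 0, p.2 0)) ⁻¹' V ∈ 𝓤 (ℕ → Y) :=
    Pi.uniformContinuous_proj (fun _ => Y) 0 hV
  calc ENNReal.log (Fintype.card ι)
        = ExpGrowth.expGrowthSup fun n => (Fintype.card ι : ℝ≥0∞) ^ n :=
          ExpGrowth.expGrowthSup_pow.symm
    _ ≤ netEntropyEntourage leftShift univ _ := ExpGrowth.expGrowthSup_monotone fun n => by
        simpa using ENat.toENNReal_le.2 (pow_card_le_netMaxcard_leftShift hV hsep n)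
    _ ≤ coverEntropy leftShift univ := netEntropyEntourage_le_coverEntropy leftShift univ hW

theorem coverEntropy_leftShift [T0Space Y] [Infinite Y] :
    coverEntropy (leftShift (Y := Y)) univ = ⊤ := by
  refine eq_top_iff.2 ?_
  calc (⊤ : EReal) = ⨆ k : ℕ, ENNReal.log k := by
        rw [← ENNReal.log_top, ← ENNReal.iSup_natCast, ← ENNReal.logOrderIso_apply,
          OrderIso.map_iSup]
        rfl
    _ ≤ coverEntropy leftShift univ := iSup_le fun k => by
        simpa using log_card_le_coverEntropy_leftShift
          ((Infinite.natEmbedding Y).injective.comp (Fin.val_injective (n := k)))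

end Shift

lemma Function.Semiconj.coverEntropy_univ_le {X Y : Type*} [UniformSpace X] [UniformSpace Y]
    {S : X → X} {T : Y → Y} {φ : X → Y} (h : Semiconj φ S T) (hφ : UniformContinuous φ)
    (hφs : Surjective φ) : coverEntropy T univ ≤ coverEntropy S univ := by
  simpa [hφs.range_eq] using coverEntropy_image_le_of_uniformContinuous h hφ univ

section CellularAutomaton

variable {X : Type*} {I : Finset ℤ} {f : (↥I → X) → X}

lemma continuous_caMap [TopologicalSpace X] (hf : Continuous f) : Continuous (caMap I f) :=
  continuous_pi fun _ => hf.comp (continuous_pi fun _ => continuous_apply _)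

lemma caMap_iterate_apply_congr {m : ℤ} (hm : ∀ j ∈ I, j ≤ m) (t : ℕ) {x y : ℤ → X} {n : ℤ}
    (h : ∀ p ≤ n + t * m, x p = y p) : (caMap I f)^[t] x n = (caMap I f)^[t] y n := by
  induction t generalizing n with
  | zero => exact h n (by simp)
  | succ t ih =>
    simp only [iterate_succ_apply', caMap]
    congr 1
    funext j
    refine ih fun p hp => h p ?_
    have := hm j j.2
    push_cast
    linarith

lemma surjective_caMap_iterate_update {m : ℤ} (hmI : m ∈ I) (hm : ∀ j ∈ I, j ≤ m)
    (hperm : ∀ u : ↥I → X, Surjective fun a => f (update u ⟨m, hmI⟩ a)) (t : ℕ) (x : ℤ → X)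
    (n : ℤ) : Surjective fun a => (caMap I f)^[t] (update x (n + t * m) a) n := by
  induction t generalizing n with
  | zero => exact fun a => ⟨a, by simp⟩
  | succ t ih =>
    have hstep (a : X) : (caMap I f)^[t + 1] (update x (n + (t + 1 : ℕ) * m) a) n =
        f (update (fun j : ↥I => (caMap I f)^[t] x (n + j)) ⟨m, hmI⟩
          ((caMap I f)^[t] (update x (n + m + t * m) a) (n + m))) := by
      rw [iterate_succ_apply']
      refine congrArg f (eq_update_iff.2 ⟨by push_cast; ring_nf, fun j hj => ?_⟩)
      have hjm : (j : ℤ) < m := (hm j j.2).lt_of_ne fun h => hj (Subtype.ext h)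
      refine caMap_iterate_apply_congr hm t fun p hp => update_of_ne ?_ _ _
      push_cast
      linarith
    simp only [hstep]
    exact (hperm _).comp (ih (n + m))

def caTrace (F : (ℤ → X) → (ℤ → X)) (x : ℤ → X) : ℕ → X := fun t => F^[t] x 0

lemma semiconj_caTrace (F : (ℤ → X) → (ℤ → X)) : Semiconj (caTrace F) F leftShift :=
  fun x => funext fun t => congrFun (iterate_succ_apply F t x) 0

lemma continuous_caTrace [TopologicalSpace X] {F : (ℤ → X) → (ℤ → X)} (hF : Continuous F) :
    Continuous (caTrace F) :=
  continuous_pi fun t => (continuous_apply 0).comp (hF.iterate t)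

lemma surjective_caTrace [TopologicalSpace X] [CompactSpace X] [T2Space X] (hf : Continuous f)
    {m : ℤ} (hmI : m ∈ I) (hm : ∀ j ∈ I, j ≤ m) (hm0 : 0 < m)
    (hperm : ∀ u : ↥I → X, Surjective fun a => f (update u ⟨m, hmI⟩ a)) :
    Surjective (caTrace (caMap I f)) := by
  intro a
  let K (t : ℕ) : Set (ℤ → X) := {x | ∀ s ≤ t, (caMap I f)^[s] x 0 = a s}
  have hK_closed (t : ℕ) : IsClosed (K t) := by
    simp only [K, ofPred_forall]
    exact isClosed_biInter fun s _ =>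
      isClosed_eq ((continuous_apply 0).comp ((continuous_caMap hf).iterate s)) continuous_const
  have hK_nonempty (t : ℕ) : (K t).Nonempty := by
    induction t with
    | zero => exact ⟨fun _ => a 0, fun s hs => by simp [Nat.le_zero.1 hs]⟩
    | succ t ih =>
      obtain ⟨x, hx⟩ := ih
      obtain ⟨b, hb⟩ := surjective_caMap_iterate_update hmI hm hperm (t + 1) x 0 (a (t + 1))
      refine ⟨update x (0 + (t + 1 : ℕ) * m) b, fun s hs => ?_⟩
      rcases hs.lt_or_eq with hs | rfl
      · rw [← hx s (Nat.lt_succ_iff.1 hs)]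
        refine caMap_iterate_apply_congr hm s fun p hp => update_of_ne ?_ _ _
        have hsm : (s : ℤ) * m < (t + 1 : ℕ) * m :=
          mul_lt_mul_of_pos_right (by exact_mod_cast hs) hm0
        exact (hp.trans_lt (by simpa using hsm)).ne
      · exact hb
  obtain ⟨x, hx⟩ := IsCompact.nonempty_iInter_of_sequence_nonempty_isCompact_isClosed K
    (fun t x hx s hs => hx s (hs.trans t.le_succ)) hK_nonempty (hK_closed 0).isCompact hK_closed
  exact ⟨x, funext fun t => mem_iInter.1 hx t t le_rfl⟩

theorem coverEntropy_caMap_eq_top_of_rightPermutative [UniformSpace X] [CompactSpace X]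
    [T2Space X] [Infinite X] (hf : Continuous f) {m : ℤ} (hmI : m ∈ I) (hm : ∀ j ∈ I, j ≤ m)
    (hm0 : 0 < m) (hperm : ∀ u : ↥I → X, Surjective fun a => f (update u ⟨m, hmI⟩ a)) :
    coverEntropy (caMap I f) univ = ⊤ :=
  eq_top_iff.2 <| coverEntropy_leftShift.ge.trans <| (semiconj_caTrace _).coverEntropy_univ_le
    (CompactSpace.uniformContinuous_of_continuous (continuous_caTrace (continuous_caMap hf)))
    (surjective_caTrace hf hmI hm hm0 hperm)

def Finset.negEquiv (I : Finset ℤ) : ↥I ≃ ↥(-I) :=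
  (Equiv.neg ℤ).subtypeEquiv fun _ => by simp

def reflectRule (f : (↥I → X) → X) : (↥(-I) → X) → X := fun u => f (u ∘ I.negEquiv)

lemma semiconj_reflect_caMap :
    Semiconj (fun (x : ℤ → X) n => x (-n)) (caMap I f) (caMap (-I) (reflectRule f)) :=
  fun x => funext fun n => congrArg f <| funext fun j =>
    congrArg x (by simp [Finset.negEquiv, add_comm])

lemma reflectRule_update (u : ↥(-I) → X) (j : ↥I) (a : X) :
    reflectRule f (update u (I.negEquiv j) a) = f (update (u ∘ I.negEquiv) j a) := by
  rw [reflectRule, update_comp_equiv, Equiv.symm_apply_apply]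

theorem coverEntropy_caMap_eq_top_of_leftPermutative [UniformSpace X] [CompactSpace X]
    [T2Space X] [Infinite X] (hf : Continuous f) {l : ℤ} (hlI : l ∈ I) (hl : ∀ j ∈ I, l ≤ j)
    (hl0 : l < 0) (hperm : ∀ u : ↥I → X, Surjective fun a => f (update u ⟨l, hlI⟩ a)) :
    coverEntropy (caMap I f) univ = ⊤ := by
  have hreflect_top : coverEntropy (caMap (-I) (reflectRule f)) univ = ⊤ := by
    refine coverEntropy_caMap_eq_top_of_rightPermutative (hf.comp (by fun_prop))
      (I.negEquiv ⟨l, hlI⟩).2 (fun j hj => le_neg.1 (hl _ (Finset.mem_neg'.1 hj)))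
      (neg_pos.2 hl0) fun u => ?_
    simpa only [← reflectRule_update] using hperm (u ∘ I.negEquiv)
  refine eq_top_iff.2 (hreflect_top.ge.trans (semiconj_reflect_caMap.coverEntropy_univ_le ?_ ?_))
  · exact uniformContinuous_pi.2 fun n => Pi.uniformContinuous_proj _ (-n)
  · exact fun y => ⟨fun n => y (-n), funext fun n => by simp⟩

end CellularAutomaton

/-- a permutative cellular automaton on `X^ℤ` with `X` infinite compact
metrizable (and nontrivial domain, i.e. `I ≠ {0}`) has infinite topological entropy. -/
theorem ca_permutative_entropy_top {X : Type*} [MetricSpace X] [CompactSpace X] [Infinite X]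
    (I : Finset ℤ) (hI : I.Nonempty) (f : (↥I → X) → X) (hf : Continuous f)
    (hnz : ∃ j ∈ I, j ≠ 0)
    (hperm : ∀ j : ↥I, ((j : ℤ) = I.max' hI ∨ (j : ℤ) = I.min' hI) → (j : ℤ) ≠ 0 →
      ∀ u : ↥I → X, Function.Surjective fun a : X => f (Function.update u j a)) :
    Dynamics.coverEntropy (caMap I f) Set.univ = ⊤ := by
  rcases lt_or_ge 0 (I.max' hI) with hmax | hmax
  · exact coverEntropy_caMap_eq_top_of_rightPermutative hf (I.max'_mem hI) (I.le_max' · ·) hmax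
      (hperm _ (Or.inl rfl) hmax.ne')
  · have hmin : I.min' hI < 0 := by
      obtain ⟨j, hjI, hj0⟩ := hnz
      have := I.min'_le j hjI
      have := I.le_max' j hjI
      omega
    exact coverEntropy_caMap_eq_top_of_leftPermutative hf (I.min'_mem hI) (I.min'_le · ·) hmin
      (hperm _ (Or.inr rfl) hmin.ne)
end
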